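/- arXiv:2508.12091 — 11 statements merged into one kernel-verified Lean document; each statement's English description precedes it below -/
import Mathlib

section
/- Let j > 0 be a real number and let 0 < α < j. Then the j-th position moment of the slicer map satisfies M_j^α(m) / m^{j-α} → 2j/(j-α) as m → ∞. -/
open Filter Topology

/-- Slicer lengths: `l_M(α) = (M + 2^(1/α))^(-α)`. -/
noncomputable def slicerLen (α : ℝ) (M : ℕ) : ℝ :=
  ((M : ℝ) + (2 : ℝ) ^ (1 / α)) ^ (-α)

/-- Interval lengths: `Δ_k(α) = l_{k-1}(α) - l_k(α)` (for `k ≥ 1`). -/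
noncomputable def slicerDelta (α : ℝ) (k : ℕ) : ℝ :=
  slicerLen α (k - 1) - slicerLen α k

/-- `j`-th position moment of the slicer map at time `m`. -/
noncomputable def slicerMoment (α j : ℝ) (m : ℕ) : ℝ :=
  2 * ∑ k ∈ Finset.Icc 1 m, (k : ℝ) ^ j * slicerDelta α k
    + 2 * (m : ℝ) ^ j * slicerLen α m

/-- 3-point position autocorrelation function of the slicer map. -/
noncomputable def slicerPhi (α : ℝ) (m₁ m₂ m₃ : ℕ) : ℝ :=
  2 * ∑ k ∈ Finset.Icc 1 m₁, (k : ℝ) ^ 3 * slicerDelta α k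
    + 2 * (m₁ : ℝ) * ∑ k ∈ Finset.Icc (m₁ + 1) m₂, (k : ℝ) ^ 2 * slicerDelta α k
    + 2 * (m₁ : ℝ) * (m₂ : ℝ) * ∑ k ∈ Finset.Icc (m₂ + 1) m₃, (k : ℝ) * slicerDelta α k
    + 2 * (m₁ : ℝ) * (m₂ : ℝ) * (m₃ : ℝ) * slicerLen α m₃

lemma slicer_slope (p : ℝ) :
    Tendsto (fun x : ℝ => ((1 + x) ^ p - 1) / x) (𝓝[≠] (0:ℝ)) (𝓝 p) := by
  have hd' : HasDerivAt (fun x : ℝ => (1 + x) ^ p) p 0 := by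
    have := ((hasDerivAt_id (0:ℝ)).const_add 1).rpow_const (p := p) (Or.inl (by norm_num))
    simpa [Real.one_rpow] using this
  have := hasDerivAt_iff_tendsto_slope.1 hd'
  refine this.congr (fun x => ?_)
  simp [slope_def_field, div_eq_mul_inv, mul_comm]
lemma slicer_ratio (p : ℝ) (hp : p ≠ 0) :
    Tendsto (fun k : ℕ => (((k : ℝ) + 1) ^ p - (k : ℝ) ^ p) / (p * (k : ℝ) ^ (p - 1)))
      atTop (𝓝 1) := by
  have h0 : Tendsto (fun k : ℕ => 1 / (k : ℝ)) atTop (𝓝[≠] (0:ℝ)) := by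
    apply tendsto_nhdsWithin_of_tendsto_nhds_of_eventually_within _
      tendsto_one_div_atTop_nhds_zero_nat
    filter_upwards [eventually_gt_atTop 0] with k hk
    simp only [Set.mem_compl_singleton_iff]
    exact one_div_ne_zero (Nat.cast_pos.mpr hk).ne'
  have h1 : Tendsto (fun k : ℕ => ((1 + 1 / (k:ℝ)) ^ p - 1) / (1 / (k:ℝ)) / p)
      atTop (𝓝 (p / p)) := ((slicer_slope p).comp h0).div_const p
  rw [div_self hp] at h1
  refine h1.congr' ?_
  filter_upwards [eventually_gt_atTop 0] with k hk
  have hx : (0:ℝ) < (k:ℝ) := by exact_mod_cast hk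
  have hxp : (0:ℝ) < (k:ℝ) ^ p := Real.rpow_pos_of_pos hx p
  have e1 : (1 + 1 / (k:ℝ)) ^ p = ((k:ℝ) + 1) ^ p / (k:ℝ) ^ p := by
    rw [← Real.div_rpow (by positivity : (0:ℝ) ≤ (k:ℝ)+1) hx.le]
    congr 1
    field_simp
  have e2 : (k:ℝ) ^ (p - 1) = (k:ℝ) ^ p / (k:ℝ) := by
    rw [Real.rpow_sub hx, Real.rpow_one]
  rw [e1, e2]
  rw [div_eq_div_iff (by positivity) (by positivity)]
  field_simp

theorem slicer_moment_subcritical (α j : ℝ) (hj : 0 < j) (hα : 0 < α) (hαj : α < j) :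
    Tendsto (fun m : ℕ => slicerMoment α j m / (m : ℝ) ^ (j - α)) atTop
      (𝓝 (2 * j / (j - α))) := by
  set c : ℝ := (2 : ℝ) ^ (1 / α) with hc
  have hcpos : 0 < c := Real.rpow_pos_of_pos two_pos _
  set p : ℝ := j - α with hpdef
  have hp : 0 < p := by simp [hpdef]; linarith
  -- lengths are positive
  have hlen : ∀ k : ℕ, slicerLen α k = ((k : ℝ) + c) ^ (-α) := fun k => rfl
  have hlpos : ∀ k : ℕ, 0 < slicerLen α k := fun k =>
    Real.rpow_pos_of_pos (by positivity) _
  -- the summand after Abel summation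
  set f : ℕ → ℝ := fun k => (((k : ℝ) + 1) ^ j - (k : ℝ) ^ j) * slicerLen α k with hf
  set g : ℕ → ℝ := fun k => ((k : ℝ) + 1) ^ p - (k : ℝ) ^ p with hg
  have hgpos : ∀ k : ℕ, 0 < g k := by
    intro k
    have : (k : ℝ) ^ p < ((k : ℝ) + 1) ^ p :=
      Real.rpow_lt_rpow (Nat.cast_nonneg k) (lt_add_one _) hp
    simpa [hg] using sub_pos.2 this
  -- Abel summation identity
  have habel : ∀ m : ℕ,
      ∑ k ∈ Finset.Icc 1 m, (k : ℝ) ^ j * slicerDelta α k + (m : ℝ) ^ j * slicerLen α m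
        = ∑ k ∈ Finset.range m, f k := by
    intro m
    induction m with
    | zero => simp [Real.zero_rpow hj.ne']
    | succ n ih =>
      rw [Finset.sum_Icc_succ_top (by omega), Finset.sum_range_succ, ← ih]
      have hd : slicerDelta α (n + 1) = slicerLen α n - slicerLen α (n + 1) := by
        simp [slicerDelta]
      push_cast
      rw [hd, hf]
      push_cast
      ring
  -- telescoping sum for g
  have hSg : ∀ m : ℕ, ∑ k ∈ Finset.range m, g k = (m : ℝ) ^ p := by
    intro m
    have := Finset.sum_range_sub (f := fun k : ℕ => (k : ℝ) ^ p) m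
    simp only [hg]
    rw [show (∑ k ∈ Finset.range m, (((k:ℝ) + 1) ^ p - (k:ℝ) ^ p))
        = ∑ k ∈ Finset.range m, ((((k+1:ℕ)):ℝ) ^ p - ((k:ℕ):ℝ) ^ p) by
      apply Finset.sum_congr rfl; intro k _; push_cast; ring_nf]
    rw [this]
    simp [Real.zero_rpow hp.ne']
  have hSgtop : Tendsto (fun m : ℕ => ∑ k ∈ Finset.range m, g k) atTop atTop := by
    simp only [hSg]
    exact (tendsto_rpow_atTop hp).comp tendsto_natCast_atTop_atTop
  -- limit of f/g
  have hA := slicer_ratio j hj.ne'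
  have hB := slicer_ratio p hp.ne'
  have hCinner : Tendsto (fun k : ℕ => (k : ℝ) / ((k : ℝ) + c)) atTop (𝓝 1) := by
    have h1 : Tendsto (fun k : ℕ => (k : ℝ) + c) atTop atTop :=
      tendsto_atTop_add_const_right _ _ tendsto_natCast_atTop_atTop
    have h2 : Tendsto (fun k : ℕ => c / ((k : ℝ) + c)) atTop (𝓝 0) := by
      simpa [div_eq_mul_inv] using (h1.inv_tendsto_atTop).const_mul c
    have h3 : Tendsto (fun k : ℕ => 1 - c / ((k : ℝ) + c)) atTop (𝓝 (1 - 0)) :=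
      tendsto_const_nhds.sub h2
    rw [sub_zero] at h3
    refine h3.congr' ?_
    filter_upwards [eventually_ge_atTop 0] with k _
    have hk : (0:ℝ) < (k : ℝ) + c := by positivity
    field_simp
    ring
  have hC : Tendsto (fun k : ℕ => ((k : ℝ) / ((k : ℝ) + c)) ^ α) atTop (𝓝 1) := by
    have hcont : ContinuousAt (fun x : ℝ => x ^ α) 1 :=
      Real.continuousAt_rpow_const 1 α (Or.inl one_ne_zero)
    have := hcont.tendsto.comp hCinner
    simpa [Real.one_rpow, Function.comp_def] using this
  have heq : ∀ᶠ k : ℕ in atTop,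
      j / p * ((((k : ℝ) + 1) ^ j - (k : ℝ) ^ j) / (j * (k : ℝ) ^ (j - 1))
          / ((((k : ℝ) + 1) ^ p - (k : ℝ) ^ p) / (p * (k : ℝ) ^ (p - 1))))
          * ((k : ℝ) / ((k : ℝ) + c)) ^ α = f k / g k := by
    filter_upwards [eventually_gt_atTop 0] with k hk
    have hx : (0:ℝ) < (k : ℝ) := by exact_mod_cast hk
    have hxc : (0:ℝ) < (k : ℝ) + c := by positivity
    have hgk : g k ≠ 0 := (hgpos k).ne'
    have hxj : (0:ℝ) < (k : ℝ) ^ (j - 1) := Real.rpow_pos_of_pos hx _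
    have hxp : (0:ℝ) < (k : ℝ) ^ (p - 1) := Real.rpow_pos_of_pos hx _
    have hxa : (0:ℝ) < (k : ℝ) ^ α := Real.rpow_pos_of_pos hx _
    have hca : (0:ℝ) < ((k : ℝ) + c) ^ α := Real.rpow_pos_of_pos hxc _
    have e1 : ((k : ℝ) / ((k : ℝ) + c)) ^ α = (k : ℝ) ^ α / ((k : ℝ) + c) ^ α :=
      Real.div_rpow hx.le hxc.le α
    have e2 : slicerLen α k = (((k : ℝ) + c) ^ α)⁻¹ := by
      rw [hlen k, Real.rpow_neg hxc.le]
    have e3 : (k : ℝ) ^ (j - 1) = (k : ℝ) ^ (p - 1) * (k : ℝ) ^ α := by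
      rw [← Real.rpow_add hx]; congr 1; simp [hpdef]; ring
    simp only [hf, hg]
    rw [e1, e2, e3]
    have hgk' : (((k:ℝ) + 1) ^ p - (k:ℝ) ^ p) ≠ 0 := by simpa [hg] using hgk
    field_simp
  have hfg : Tendsto (fun k : ℕ => f k / g k) atTop (𝓝 (j / p)) := by
    have hmain : Tendsto (fun k : ℕ =>
        j / p * ((((k : ℝ) + 1) ^ j - (k : ℝ) ^ j) / (j * (k : ℝ) ^ (j - 1))
          / ((((k : ℝ) + 1) ^ p - (k : ℝ) ^ p) / (p * (k : ℝ) ^ (p - 1))))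
          * ((k : ℝ) / ((k : ℝ) + c)) ^ α) atTop (𝓝 (j / p * (1 / 1) * 1)) :=
      ((hA.div hB one_ne_zero).const_mul (j / p)).mul hC
    rw [show j / p * (1 / 1) * 1 = j / p by ring] at hmain
    exact hmain.congr' heq
  -- little-o step (Stolz–Cesàro via sums)
  have hlo : (fun k => f k - j / p * g k) =o[atTop] g := by
    rw [Asymptotics.isLittleO_iff_tendsto' (by
      filter_upwards with k hk; exact absurd hk (hgpos k).ne')]
    have := hfg.sub_const (j / p)
    rw [sub_self] at this
    refine this.congr fun k => ?_
    rw [sub_div, mul_div_cancel_right₀ _ (hgpos k).ne']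
  have hg0 : 0 ≤ g := fun k => (hgpos k).le
  have hsum := hlo.sum_range hg0 hSgtop
  -- conclude for sums of f
  have hSf : Tendsto (fun m : ℕ => (∑ k ∈ Finset.range m, f k) / (m : ℝ) ^ p)
      atTop (𝓝 (j / p)) := by
    have hne : ∀ᶠ m : ℕ in atTop, (∑ k ∈ Finset.range m, g k) ≠ 0 := by
      filter_upwards [eventually_gt_atTop 0] with m hm
      rw [hSg m]
      exact (Real.rpow_pos_of_pos (by exact_mod_cast hm) p).ne'
    have h0 : Tendsto (fun m : ℕ =>
        (∑ k ∈ Finset.range m, (f k - j / p * g k)) / ∑ k ∈ Finset.range m, g k)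
        atTop (𝓝 0) := by
      rw [← Asymptotics.isLittleO_iff_tendsto' (hne.mono fun m hm h => absurd h hm)]
      exact hsum
    have h1 : Tendsto (fun m : ℕ =>
        (∑ k ∈ Finset.range m, (f k - j / p * g k)) / (∑ k ∈ Finset.range m, g k) + j / p)
        atTop (𝓝 (0 + j / p)) := h0.add_const _
    rw [zero_add] at h1
    refine h1.congr' ?_
    filter_upwards [hne] with m hm
    rw [Finset.sum_sub_distrib, ← Finset.mul_sum, sub_div, mul_div_cancel_right₀ _ hm,
      sub_add_cancel, hSg m]
  -- final assembly
  have h2 : Tendsto (fun m : ℕ => 2 * ((∑ k ∈ Finset.range m, f k) / (m : ℝ) ^ p))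
      atTop (𝓝 (2 * (j / p))) := hSf.const_mul 2
  rw [show (2 : ℝ) * (j / p) = 2 * j / (j - α) by rw [hpdef]; ring] at h2
  refine h2.congr fun m => ?_
  rw [slicerMoment, ← habel m]
  ring
end

section
/- Let j > 0 be a real number and take α = j. Then the j-th position moment of the slicer map satisfies M_j^α(m) / log m → 2j as m → ∞, where log denotes the natural logarithm. -/
open Filter Topology

/-- Telescoped form of the critical moment. -/
lemma slicer_moment_telescope (j : ℝ) (hj : 0 < j) (m : ℕ) :
    slicerMoment j j m =
      2 * ∑ i ∈ Finset.range m, (((i : ℝ) + 1) ^ j - (i : ℝ) ^ j) * slicerLen j i := by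
  induction m with
  | zero => simp [slicerMoment, Real.zero_rpow hj.ne']
  | succ m ih =>
    rw [slicerMoment, Finset.sum_Icc_succ_top (by omega : 1 ≤ m + 1),
      Finset.sum_range_succ]
    rw [slicerMoment] at ih
    have hd : slicerDelta j (m + 1) = slicerLen j m - slicerLen j (m + 1) := by
      simp [slicerDelta]
    rw [hd]
    push_cast
    linear_combination ih

/-- The key asymptotic: `(x+1)·((x+1)^j - x^j)·(x+c)^{-j} → j`. -/
lemma slicer_key_tendsto (j : ℝ) (hj : 0 < j) :
    Tendsto (fun x : ℝ => (x + 1) * (((x + 1) ^ j - x ^ j) * (x + (2:ℝ) ^ (1/j)) ^ (-j)))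
      atTop (𝓝 j) := by
  set c : ℝ := (2:ℝ) ^ (1/j) with hc
  have hc0 : 0 < c := Real.rpow_pos_of_pos (by norm_num) _
  have hder : HasDerivAt (fun y : ℝ => y ^ j) j 1 := by
    have := Real.hasDerivAt_rpow_const (x := 1) (p := j) (Or.inl one_ne_zero)
    simpa using this
  have hslope : Tendsto (slope (fun y : ℝ => y ^ j) 1) (𝓝[≠] 1) (𝓝 j) :=
    hasDerivAt_iff_tendsto_slope.mp hder
  have h1 : Tendsto (fun x : ℝ => (x + 1) / x) atTop (𝓝 1) := by
    have : Tendsto (fun x : ℝ => 1 + 1 / x) atTop (𝓝 (1 + 0)) :=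
      tendsto_const_nhds.add (tendsto_const_nhds.div_atTop tendsto_id)
    rw [add_zero] at this
    apply this.congr'
    filter_upwards [eventually_gt_atTop 0] with x hx
    field_simp
  have h1' : Tendsto (fun x : ℝ => (x + 1) / x) atTop (𝓝[≠] 1) := by
    rw [tendsto_nhdsWithin_iff]
    refine ⟨h1, ?_⟩
    filter_upwards [eventually_gt_atTop 0] with x hx
    have hne : (x + 1) / x = 1 + 1 / x := by field_simp
    simp only [Set.mem_compl_iff, Set.mem_singleton_iff, hne]
    have : 0 < 1 / x := by positivity
    intro h; nlinarith
  have hsl : Tendsto (fun x : ℝ => slope (fun y : ℝ => y ^ j) 1 ((x + 1) / x))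
      atTop (𝓝 j) := hslope.comp h1'
  have h3base : Tendsto (fun x : ℝ => x / (x + c)) atTop (𝓝 1) := by
    have h0 : Tendsto (fun x : ℝ => 1 - c / (x + c)) atTop (𝓝 (1 - 0)) :=
      tendsto_const_nhds.sub
        (tendsto_const_nhds.div_atTop (tendsto_atTop_add_const_right _ c tendsto_id))
    rw [sub_zero] at h0
    apply h0.congr'
    filter_upwards [eventually_gt_atTop 0] with x hx
    have hxc : x + c ≠ 0 := by positivity
    field_simp
    ring
  have h3 : Tendsto (fun x : ℝ => (x / (x + c)) ^ j) atTop (𝓝 1) := by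
    have := h3base.rpow_const (p := j) (Or.inr hj.le)
    simpa using this
  have hprod : Tendsto (fun x : ℝ =>
      slope (fun y : ℝ => y ^ j) 1 ((x + 1) / x) * ((x + 1) / x) * (x / (x + c)) ^ j)
      atTop (𝓝 j) := by
    have := (hsl.mul h1).mul h3
    simpa using this
  apply hprod.congr'
  filter_upwards [eventually_gt_atTop 0] with x hx
  have hx1 : (0:ℝ) < x + 1 := by linarith
  have hxc : (0:ℝ) < x + c := by positivity
  have hB : (0:ℝ) < x ^ j := Real.rpow_pos_of_pos hx _
  have hC : (0:ℝ) < (x + c) ^ j := Real.rpow_pos_of_pos hxc _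
  rw [slope_def_field]
  have e1 : ((x + 1) / x) ^ j = (x + 1) ^ j / x ^ j := Real.div_rpow hx1.le hx.le _
  have e2 : (x / (x + c)) ^ j = x ^ j / (x + c) ^ j := Real.div_rpow hx.le hxc.le _
  have e3 : (x + c) ^ (-j) = ((x + c) ^ j)⁻¹ := Real.rpow_neg hxc.le _
  have e4 : (x + 1) / x - 1 = 1 / x := by field_simp; ring
  rw [e1, e2, e3, e4, Real.one_rpow]
  field_simp

theorem slicer_moment_critical (α j : ℝ) (hj : 0 < j) (hαj : α = j) :
    Tendsto (fun m : ℕ => slicerMoment α j m / Real.log m) atTop (𝓝 (2 * j)) := by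
  subst hαj
  set g : ℕ → ℝ := fun i => (((i : ℝ) + 1) ^ α - (i : ℝ) ^ α) * slicerLen α i with hg
  set H : ℕ → ℝ := fun n => ∑ i ∈ Finset.range n, ((i : ℝ) + 1)⁻¹ with hH
  set f : ℕ → ℝ := fun i => g i - α * ((i : ℝ) + 1)⁻¹ with hf
  set P : ℕ → ℝ := fun n => ∑ i ∈ Finset.range n, f i with hP
  -- the nat version of the key limit
  have hnat : Tendsto (fun i : ℕ => ((i : ℝ) + 1) * g i) atTop (𝓝 α) := by
    have := (slicer_key_tendsto α hj).comp tendsto_natCast_atTop_atTop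
    apply this.congr
    intro i
    simp only [Function.comp_apply, hg, slicerLen]
  -- f is little-o of 1/(i+1)
  have hfo : f =o[atTop] (fun i : ℕ => ((i : ℝ) + 1)⁻¹) := by
    rw [Asymptotics.isLittleO_iff_tendsto' (by
      filter_upwards with i h
      exact absurd h (by positivity))]
    have h0 : Tendsto (fun i : ℕ => ((i : ℝ) + 1) * g i - α) atTop (𝓝 (α - α)) :=
      hnat.sub tendsto_const_nhds
    rw [sub_self] at h0
    apply h0.congr
    intro i
    have h1 : ((i : ℝ) + 1) ≠ 0 := by positivity
    rw [hf]
    field_simp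
  -- H tends to infinity
  have hHeq : ∀ n, H n = ((harmonic n : ℚ) : ℝ) := by
    intro n
    rw [hH, harmonic]
    push_cast
    rfl
  have hlogtop : Tendsto (fun n : ℕ => Real.log n) atTop atTop :=
    Real.tendsto_log_atTop.comp tendsto_natCast_atTop_atTop
  have hHgamma : Tendsto (fun n : ℕ => H n - Real.log n) atTop
      (𝓝 Real.eulerMascheroniConstant) := by
    have := Real.tendsto_harmonic_sub_log
    apply this.congr
    intro n
    rw [hHeq]
  have hHtop : Tendsto H atTop atTop := by
    have := hHgamma.add_atTop hlogtop
    apply this.congr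
    intro n; ring
  -- partial sums of f are little-o of H
  have hsum : P =o[atTop] H := by
    have := hfo.sum_range (fun i => by positivity) hHtop
    exact this
  have hPH : Tendsto (fun n => P n / H n) atTop (𝓝 0) := hsum.tendsto_div_nhds_zero
  -- H / log → 1
  have hHlog : Tendsto (fun n : ℕ => H n / Real.log n) atTop (𝓝 1) := by
    have h0 : Tendsto (fun n : ℕ => (H n - Real.log n) * (Real.log n)⁻¹ + 1) atTop
        (𝓝 (Real.eulerMascheroniConstant * 0 + 1)) :=
      (hHgamma.mul hlogtop.inv_tendsto_atTop).add tendsto_const_nhds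
    rw [mul_zero, zero_add] at h0
    apply h0.congr'
    filter_upwards [eventually_ge_atTop 2] with n hn
    have hln : 0 < Real.log n := by
      apply Real.log_pos
      exact_mod_cast Nat.lt_of_lt_of_le one_lt_two hn
    field_simp
    ring
  -- P / log → 0
  have hPlog : Tendsto (fun n : ℕ => P n / Real.log n) atTop (𝓝 0) := by
    have h0 : Tendsto (fun n : ℕ => (P n / H n) * (H n / Real.log n)) atTop (𝓝 (0 * 1)) :=
      hPH.mul hHlog
    rw [zero_mul] at h0
    apply h0.congr'
    filter_upwards [hHtop.eventually_gt_atTop 0] with n hn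
    rw [div_mul_div_comm, mul_comm (H n), mul_div_mul_right _ _ hn.ne']
  -- combine
  have hmain : Tendsto (fun m : ℕ => 2 * (P m / Real.log m) + 2 * α * (H m / Real.log m))
      atTop (𝓝 (2 * 0 + 2 * α * 1)) :=
    (hPlog.const_mul 2).add (hHlog.const_mul (2 * α))
  rw [mul_zero, zero_add, mul_one] at hmain
  apply hmain.congr
  intro m
  have hsplit : ∑ i ∈ Finset.range m, g i = P m + α * H m := by
    rw [hP, hH, Finset.mul_sum, ← Finset.sum_add_distrib]
    refine Finset.sum_congr rfl fun i _ => ?_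
    rw [hf]; ring
  rw [slicer_moment_telescope α hj, hsplit]
  ring
end

section
/- Let j > 0 be a real number and let α > j. Then the j-th position moment of the slicer map converges: there exists a finite real number C such that M_j^α(m) → C as m → ∞. -/
open Filter Topology

lemma slicer_one_le_c {α : ℝ} (hα : 0 < α) : (1:ℝ) ≤ (2:ℝ) ^ (1/α : ℝ) :=
  Real.one_le_rpow one_le_two (by positivity)

lemma slicer_base_pos {α : ℝ} (hα : 0 < α) (M : ℕ) :
    0 < (M : ℝ) + (2:ℝ) ^ (1/α : ℝ) := by
  have h1 := slicer_one_le_c hα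
  have h2 : (0:ℝ) ≤ (M:ℝ) := Nat.cast_nonneg M
  linarith

lemma slicerLen_pos {α : ℝ} (hα : 0 < α) (M : ℕ) : 0 < slicerLen α M :=
  Real.rpow_pos_of_pos (slicer_base_pos hα M) _

lemma rpow_diff_le {j : ℝ} (hj : 0 < j) {x : ℝ} (hx : 1 ≤ x) :
    (x + 1) ^ j - x ^ j ≤ j * (1 + (2:ℝ) ^ (j - 1)) * x ^ (j - 1) := by
  have hx0 : 0 < x := lt_of_lt_of_le one_pos hx
  have hcont : ContinuousOn (fun y : ℝ => y ^ j) (Set.Icc x (x + 1)) := by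
    apply ContinuousOn.rpow_const continuousOn_id
    intro y hy
    refine Or.inl fun h => ?_
    have h1 := hy.1
    rw [id] at h
    nlinarith
  have hderiv : ∀ y ∈ Set.Ioo x (x + 1),
      HasDerivAt (fun y : ℝ => y ^ j) (j * y ^ (j - 1)) y := by
    intro y hy
    exact Real.hasDerivAt_rpow_const (Or.inl (by have := hy.1; intro h; nlinarith))
  obtain ⟨c, hc, hslope⟩ := exists_hasDerivAt_eq_slope (fun y : ℝ => y ^ j)
    (fun y => j * y ^ (j - 1)) (by linarith : x < x + 1) hcont hderiv
  have hcx : x < c := hc.1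
  have hc2 : c < x + 1 := hc.2
  have hc0 : 0 < c := lt_trans hx0 hcx
  have heq : (x + 1) ^ j - x ^ j = j * c ^ (j - 1) := by
    rw [hslope]; ring
  rw [heq]
  have hbound : c ^ (j - 1) ≤ (1 + (2:ℝ) ^ (j - 1)) * x ^ (j - 1) := by
    rcases le_total j 1 with h1 | h1
    · have h2 : c ^ (j - 1) ≤ x ^ (j - 1) :=
        Real.rpow_le_rpow_of_nonpos hx0 hcx.le (by linarith)
      have h3 : (0:ℝ) ≤ (2:ℝ) ^ (j - 1) := (Real.rpow_pos_of_pos two_pos _).le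
      have h4 : (0:ℝ) ≤ x ^ (j - 1) := (Real.rpow_pos_of_pos hx0 _).le
      nlinarith
    · have h2 : c ^ (j - 1) ≤ (2 * x) ^ (j - 1) := by
        apply Real.rpow_le_rpow hc0.le (by linarith) (by linarith)
      have h3 : (2 * x) ^ (j - 1) = (2:ℝ) ^ (j - 1) * x ^ (j - 1) :=
        Real.mul_rpow (by norm_num) hx0.le
      have h4 : (0:ℝ) ≤ x ^ (j - 1) := (Real.rpow_pos_of_pos hx0 _).le
      nlinarith
  calc j * c ^ (j - 1) ≤ j * ((1 + (2:ℝ) ^ (j - 1)) * x ^ (j - 1)) := by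
        exact mul_le_mul_of_nonneg_left hbound hj.le
    _ = j * (1 + (2:ℝ) ^ (j - 1)) * x ^ (j - 1) := by ring

-- telescoped form
lemma slicerMoment_eq {α j : ℝ} (hα : 0 < α) (hj : 0 < j) (m : ℕ) :
    slicerMoment α j m =
      2 * ∑ k ∈ Finset.range m, (((k:ℝ) + 1) ^ j - (k:ℝ) ^ j) * slicerLen α k := by
  induction m with
  | zero => simp [slicerMoment, Real.zero_rpow hj.ne']
  | succ m ih =>
    have h1 : (1:ℕ) ≤ m + 1 := Nat.succ_le_succ (Nat.zero_le m)
    have hdel : slicerDelta α (m + 1) = slicerLen α m - slicerLen α (m + 1) := by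
      simp [slicerDelta]
    have : slicerMoment α j (m + 1) = slicerMoment α j m
        + 2 * (((m:ℝ) + 1) ^ j - (m:ℝ) ^ j) * slicerLen α m := by
      simp only [slicerMoment, Finset.sum_Icc_succ_top h1, hdel]
      push_cast
      ring
    rw [this, ih, Finset.sum_range_succ]
    ring

theorem slicer_moment_supercritical (α j : ℝ) (hj : 0 < j) (hαj : j < α) :
    ∃ C : ℝ, Tendsto (fun m : ℕ => slicerMoment α j m) atTop (𝓝 C) := by
  have hα : 0 < α := lt_trans hj hαj
  set a : ℕ → ℝ := fun k => (((k:ℝ) + 1) ^ j - (k:ℝ) ^ j) * slicerLen α k with ha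
  have hsum : Summable a := by
    rw [← summable_nat_add_iff 1]
    set C : ℝ := j * (1 + (2:ℝ) ^ (j - 1)) with hC
    have hCpos : 0 < C := by positivity
    have hbsum : Summable (fun k : ℕ => C * ((k:ℝ) + 1) ^ (j - 1 - α)) := by
      apply Summable.mul_left
      have h1 : Summable (fun n : ℕ => (n:ℝ) ^ (j - 1 - α)) :=
        Real.summable_nat_rpow.mpr (by linarith)
      have h2 := (summable_nat_add_iff 1).mpr h1
      refine h2.congr fun n => ?_
      push_cast
      ring_nf
    refine Summable.of_nonneg_of_le (fun k => ?_) (fun k => ?_) hbsum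
    · apply mul_nonneg _ (slicerLen_pos hα _).le
      have : ((k + 1 : ℕ):ℝ) ^ j ≤ (((k + 1 : ℕ):ℝ) + 1) ^ j :=
        Real.rpow_le_rpow (by positivity) (by linarith) hj.le
      linarith
    · have hx1 : (1:ℝ) ≤ (k:ℝ) + 1 := by have := Nat.cast_nonneg (α := ℝ) k; linarith
      have hx0 : (0:ℝ) < (k:ℝ) + 1 := by positivity
      have hlen : slicerLen α (k + 1) ≤ ((k:ℝ) + 1) ^ (-α) := by
        apply Real.rpow_le_rpow_of_nonpos hx0 _ (by linarith)
        have := slicer_one_le_c hα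
        push_cast
        linarith
      have hdiff : (((k:ℝ) + 1) + 1) ^ j - ((k:ℝ) + 1) ^ j ≤ C * ((k:ℝ) + 1) ^ (j - 1) :=
        rpow_diff_le hj hx1
      have hdnn : (0:ℝ) ≤ (((k:ℝ) + 1) + 1) ^ j - ((k:ℝ) + 1) ^ j := by
        have : ((k:ℝ) + 1) ^ j ≤ (((k:ℝ) + 1) + 1) ^ j :=
          Real.rpow_le_rpow (by positivity) (by linarith) hj.le
        linarith
      have key : a (k + 1) ≤ C * ((k:ℝ) + 1) ^ (j - 1) * (((k:ℝ) + 1) ^ (-α)) := by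
        have : a (k + 1) = ((((k:ℝ) + 1) + 1) ^ j - ((k:ℝ) + 1) ^ j) * slicerLen α (k + 1) := by
          simp only [ha]
          push_cast
          ring_nf
        rw [this]
        apply mul_le_mul hdiff hlen (slicerLen_pos hα _).le
        positivity
      calc a (k + 1) ≤ C * ((k:ℝ) + 1) ^ (j - 1) * (((k:ℝ) + 1) ^ (-α)) := key
        _ = C * ((k:ℝ) + 1) ^ (j - 1 - α) := by
            rw [mul_assoc, ← Real.rpow_add hx0]; ring_nf
  refine ⟨2 * ∑' k, a k, ?_⟩
  have h := hsum.hasSum.tendsto_sum_nat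
  have h2 := h.const_mul (2:ℝ)
  apply h2.congr
  intro m
  exact (slicerMoment_eq hα hj m).symm
end

section
/- Let 0 < α < 1 and fix natural numbers m₁ ≤ m₂ with m₁ ≥ 1. Then the 3-point position autocorrelation function of the slicer map satisfies φ_α(m₁, m₂, m₃) / m₃^{1-α} → 2·m₁·m₂/(1-α) as m₃ → ∞. -/
open Filter Topology

/-- MVT slope bounds for `x ↦ x ^ (1 - α)`. -/
lemma slicer_slope_bounds {α : ℝ} (hα : 0 < α) (hα1 : α < 1) {a : ℝ} (ha : 0 < a) :
    (1 - α) * (a + 1) ^ (-α) ≤ (a + 1) ^ (1 - α) - a ^ (1 - α) ∧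
      (a + 1) ^ (1 - α) - a ^ (1 - α) ≤ (1 - α) * a ^ (-α) := by
  obtain ⟨ξ, hmem, hξ⟩ := exists_hasDerivAt_eq_slope (fun x : ℝ => x ^ (1 - α))
    (fun x : ℝ => (1 - α) * x ^ (-α)) (by linarith : a < a + 1)
    (fun x hx => (Real.continuousAt_rpow_const x (1 - α)
      (Or.inl (ne_of_gt (lt_of_lt_of_le ha hx.1)))).continuousWithinAt)
    (fun x hx => by
      simpa [show 1 - α - 1 = -α by ring] using
        Real.hasDerivAt_rpow_const (p := 1 - α) (Or.inl (ne_of_gt (ha.trans hx.1))))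
  have h1 : (1 - α) * ξ ^ (-α) = (a + 1) ^ (1 - α) - a ^ (1 - α) := by
    rw [hξ]; simp
  obtain ⟨hl, hr⟩ := hmem
  have hξpos : 0 < ξ := lt_trans ha hl
  constructor
  · rw [← h1]
    exact mul_le_mul_of_nonneg_left
      (Real.rpow_le_rpow_of_nonpos hξpos hr.le (by linarith)) (by linarith)
  · rw [← h1]
    exact mul_le_mul_of_nonneg_left
      (Real.rpow_le_rpow_of_nonpos ha hl.le (by linarith)) (by linarith)

lemma slicer_ratio_tendsto {α : ℝ} (d : ℝ) :
    Tendsto (fun n : ℕ => ((n : ℝ) + d) ^ (1 - α) / (n : ℝ) ^ (1 - α)) atTop (𝓝 1) := by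
  have h1 : Tendsto (fun n : ℕ => ((n : ℝ) + d) / (n : ℝ)) atTop (𝓝 1) := by
    have := Tendsto.add (tendsto_const_nhds : Tendsto (fun _ : ℕ => (1:ℝ)) atTop (𝓝 1))
      (((tendsto_const_nhds : Tendsto (fun _ : ℕ => d) atTop (𝓝 d)).div_atTop
        (tendsto_natCast_atTop_atTop (R := ℝ))))
    simp only [add_zero] at this
    apply this.congr'
    filter_upwards [eventually_gt_atTop 0] with n hn
    field_simp
  have h2 : Tendsto (fun x : ℝ => x ^ (1 - α)) (𝓝 1) (𝓝 1) := by
    have := (Real.continuousAt_rpow_const 1 (1 - α) (Or.inl one_ne_zero)).tendsto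
    simpa using this
  apply (h2.comp h1).congr'
  filter_upwards [eventually_ge_atTop 1, eventually_ge_atTop (Nat.ceil (-d) + 1)] with n hn hn2
  have hnd : (0:ℝ) ≤ (n : ℝ) + d := by
    have h3 : (-d) ≤ ((Nat.ceil (-d) + 1 : ℕ) : ℝ) := by
      push_cast
      calc (-d) ≤ Nat.ceil (-d) := Nat.le_ceil _
        _ ≤ _ := by linarith
    have : (-d) ≤ (n : ℝ) := le_trans h3 (by exact_mod_cast hn2)
    linarith
  simp only [Function.comp_apply]
  rw [Real.div_rpow hnd (Nat.cast_nonneg n)]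

lemma slicer_phi_decomp (α : ℝ) (m₁ m₂ : ℕ) :
    ∀ n, m₂ ≤ n → slicerPhi α m₁ m₂ n =
      (2 * ∑ k ∈ Finset.Icc 1 m₁, (k : ℝ) ^ 3 * slicerDelta α k
        + 2 * (m₁:ℝ) * ∑ k ∈ Finset.Icc (m₁ + 1) m₂, (k : ℝ) ^ 2 * slicerDelta α k
        + 2 * (m₁:ℝ) * (m₂:ℝ) * ((m₂:ℝ) * slicerLen α m₂))
      + 2 * (m₁:ℝ) * (m₂:ℝ) * ∑ k ∈ Finset.Ico m₂ n, slicerLen α k := by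
  intro n hn
  induction n, hn using Nat.le_induction with
  | base => simp [slicerPhi]; ring
  | succ n hn ih =>
    simp only [slicerPhi] at ih ⊢
    rw [Finset.sum_Icc_succ_top (by omega : m₂ + 1 ≤ n + 1), Finset.sum_Ico_succ_top hn]
    have hd : slicerDelta α (n+1) = slicerLen α n - slicerLen α (n+1) := by
      simp [slicerDelta]
    rw [hd]
    push_cast
    linear_combination ih

lemma slicer_sum_lower {α : ℝ} (hα : 0 < α) (hα1 : α < 1) (m₂ : ℕ) :
    ∀ n, m₂ ≤ n → ((n:ℝ) + 2^(1/α))^(1-α) - ((m₂:ℝ) + 2^(1/α))^(1-α)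
      ≤ (1-α) * ∑ k ∈ Finset.Ico m₂ n, slicerLen α k := by
  intro n hn
  induction n, hn using Nat.le_induction with
  | base => simp
  | succ n hn ih =>
    rw [Finset.sum_Ico_succ_top hn, mul_add]
    have hc : (0:ℝ) < (2:ℝ)^(1/α) := Real.rpow_pos_of_pos two_pos _
    have h := (slicer_slope_bounds hα hα1 (a := (n:ℝ) + 2^(1/α)) (by positivity)).2
    have hlen : slicerLen α n = ((n:ℝ) + 2^(1/α)) ^ (-α) := rfl
    rw [show ((n:ℝ) + 2^(1/α)) + 1 = ((n:ℝ) + 1 + 2^(1/α)) by ring] at h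
    push_cast
    rw [hlen]
    linarith

lemma slicer_sum_upper {α : ℝ} (hα : 0 < α) (hα1 : α < 1) (m₂ : ℕ) :
    ∀ n, m₂ ≤ n → (1-α) * ∑ k ∈ Finset.Ico m₂ n, slicerLen α k
      ≤ ((n:ℝ) - 1 + 2^(1/α))^(1-α) - ((m₂:ℝ) - 1 + 2^(1/α))^(1-α) := by
  have hc1 : (1:ℝ) < (2:ℝ)^(1/α) := by
    rw [Real.one_lt_rpow_iff_of_pos two_pos]
    exact Or.inl ⟨by norm_num, by positivity⟩
  intro n hn
  induction n, hn using Nat.le_induction with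
  | base => simp
  | succ n hn ih =>
    rw [Finset.sum_Ico_succ_top hn, mul_add]
    have h := (slicer_slope_bounds hα hα1 (a := (n:ℝ) - 1 + 2^(1/α))
      (by have h0 : (0:ℝ) ≤ (n:ℝ) := Nat.cast_nonneg n; linarith)).1
    have hlen : slicerLen α n = ((n:ℝ) + 2^(1/α)) ^ (-α) := rfl
    rw [show ((n:ℝ) - 1 + 2^(1/α)) + 1 = ((n:ℝ) + 2^(1/α)) by ring] at h
    push_cast
    rw [hlen, show (n:ℝ) + 1 - 1 = (n:ℝ) by ring]
    linarith

theorem slicer_phi_m1m2_fixed (α : ℝ) (hα : 0 < α) (hα1 : α < 1)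
    (m₁ m₂ : ℕ) (hm₁ : 1 ≤ m₁) (h12 : m₁ ≤ m₂) :
    Tendsto (fun m₃ : ℕ => slicerPhi α m₁ m₂ m₃ / (m₃ : ℝ) ^ (1 - α)) atTop
      (𝓝 (2 * m₁ * m₂ / (1 - α))) := by
  have h1α : (0:ℝ) < 1 - α := by linarith
  have hc : (0:ℝ) < (2:ℝ)^(1/α) := Real.rpow_pos_of_pos two_pos _
  set T : ℕ → ℝ := fun n => ∑ k ∈ Finset.Ico m₂ n, slicerLen α k with hT
  set B : ℝ := 2 * ∑ k ∈ Finset.Icc 1 m₁, (k : ℝ) ^ 3 * slicerDelta α k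
        + 2 * (m₁:ℝ) * ∑ k ∈ Finset.Icc (m₁ + 1) m₂, (k : ℝ) ^ 2 * slicerDelta α k
        + 2 * (m₁:ℝ) * (m₂:ℝ) * ((m₂:ℝ) * slicerLen α m₂) with hB
  -- auxiliary limits
  have hnpow : Tendsto (fun n : ℕ => ((n:ℝ)^(1-α))⁻¹) atTop (𝓝 0) :=
    ((tendsto_rpow_atTop h1α).comp (tendsto_natCast_atTop_atTop (R := ℝ))).inv_tendsto_atTop
  have hratio : ∀ d K : ℝ, Tendsto (fun n : ℕ =>
      (((n:ℝ) + d)^(1-α) - K) / ((1-α) * (n:ℝ)^(1-α))) atTop (𝓝 (1/(1-α))) := by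
    intro d K
    have h1 := (slicer_ratio_tendsto (α := α) d).sub
      ((tendsto_const_nhds : Tendsto (fun _ : ℕ => K) atTop (𝓝 K)).mul hnpow)
    have h2 := h1.div_const (1 - α)
    simp only [mul_zero, sub_zero] at h2
    apply h2.congr fun n => ?_
    rw [← div_eq_mul_inv, div_sub_div_same, div_div, mul_comm ((n:ℝ)^(1-α)) (1-α)]
  -- limit of T n / n^(1-α)
  have hTlim : Tendsto (fun n : ℕ => T n / (n:ℝ)^(1-α)) atTop (𝓝 (1/(1-α))) := by
    apply tendsto_of_tendsto_of_tendsto_of_le_of_le'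
      (hratio (2^(1/α)) (((m₂:ℝ) + 2^(1/α))^(1-α)))
      (hratio (-1 + 2^(1/α)) (((m₂:ℝ) - 1 + 2^(1/α))^(1-α)))
    · filter_upwards [eventually_ge_atTop m₂, eventually_ge_atTop 1] with n hn hn1
      have hn0 : (0:ℝ) < (n:ℝ)^(1-α) := by
        apply Real.rpow_pos_of_pos
        exact_mod_cast Nat.lt_of_lt_of_le Nat.zero_lt_one hn1
      rw [div_le_div_iff₀ (by positivity) hn0]
      have h := slicer_sum_lower hα hα1 m₂ n hn
      nlinarith [mul_le_mul_of_nonneg_right h hn0.le]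
    · filter_upwards [eventually_ge_atTop m₂, eventually_ge_atTop 1] with n hn hn1
      have hn0 : (0:ℝ) < (n:ℝ)^(1-α) := by
        apply Real.rpow_pos_of_pos
        exact_mod_cast Nat.lt_of_lt_of_le Nat.zero_lt_one hn1
      rw [div_le_div_iff₀ hn0 (by positivity)]
      have h := slicer_sum_upper hα hα1 m₂ n hn
      have : ((n:ℝ) + (-1 + 2^(1/α))) = ((n:ℝ) - 1 + 2^(1/α)) := by ring
      rw [this]
      nlinarith [mul_le_mul_of_nonneg_right h hn0.le]
  -- combine
  have hfinal := (((tendsto_const_nhds : Tendsto (fun _ : ℕ => B) atTop (𝓝 B)).mul hnpow).add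
    ((tendsto_const_nhds : Tendsto (fun _ : ℕ => 2 * (m₁:ℝ) * (m₂:ℝ)) atTop
      (𝓝 (2 * (m₁:ℝ) * (m₂:ℝ)))).mul hTlim))
  have heq : B * 0 + 2 * (m₁:ℝ) * (m₂:ℝ) * (1/(1-α)) = 2 * m₁ * m₂ / (1 - α) := by
    field_simp
    ring
  rw [heq] at hfinal
  apply hfinal.congr'
  filter_upwards [eventually_ge_atTop m₂] with n hn
  rw [slicer_phi_decomp α m₁ m₂ n hn]
  field_simp
  simp only [hB, hT]
  ring
end

section
/- Let α = 1 and fix natural numbers m₁ ≤ m₂ with m₁ ≥ 1. Then the 3-point position autocorrelation function of the slicer map satisfies φ_α(m₁, m₂, m₃) / log m₃ → 2·m₁·m₂ as m₃ → ∞, where log denotes the natural logarithm. -/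
open Filter Topology

lemma slicerLen_one (M : ℕ) : slicerLen 1 M = ((M : ℝ) + 2)⁻¹ := by
  have h2 : (2 : ℝ) ^ (1 / (1:ℝ)) = 2 := by norm_num
  rw [slicerLen, h2, Real.rpow_neg_one]

lemma slicerPhi_eq (m₁ m₂ : ℕ) :
    ∀ n : ℕ, m₂ ≤ n →
      slicerPhi 1 m₁ m₂ n =
        (2 * ∑ k ∈ Finset.Icc 1 m₁, (k : ℝ) ^ 3 * slicerDelta 1 k
          + 2 * (m₁ : ℝ) * ∑ k ∈ Finset.Icc (m₁ + 1) m₂, (k : ℝ) ^ 2 * slicerDelta 1 k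
          + 2 * (m₁ : ℝ) * (m₂ : ℝ) * ((m₂ : ℝ) * slicerLen 1 m₂ - (harmonic (m₂ + 1) : ℝ)))
        + 2 * (m₁ : ℝ) * (m₂ : ℝ) * (harmonic (n + 1) : ℝ) := by
  intro n hn
  induction n, hn using Nat.le_induction with
  | base =>
    have he : Finset.Icc (m₂ + 1) m₂ = ∅ := Finset.Icc_eq_empty (by omega)
    rw [slicerPhi, he, Finset.sum_empty]
    ring
  | succ n hn ih =>
    have hsum : ∑ k ∈ Finset.Icc (m₂ + 1) (n + 1), (k : ℝ) * slicerDelta 1 k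
        = (∑ k ∈ Finset.Icc (m₂ + 1) n, (k : ℝ) * slicerDelta 1 k)
          + ((n : ℝ) + 1) * slicerDelta 1 (n + 1) := by
      rw [Finset.sum_Icc_succ_top (by omega)]
      push_cast
      ring
    have hharm : (harmonic (n + 1 + 1) : ℝ) = (harmonic (n + 1) : ℝ) + ((n : ℝ) + 2)⁻¹ := by
      rw [harmonic_succ]
      push_cast
      ring
    have hδ : slicerDelta 1 (n + 1) = slicerLen 1 n - slicerLen 1 (n + 1) := by
      simp [slicerDelta]
    have key : ((n : ℝ) + 1) * slicerDelta 1 (n + 1) + ((n : ℝ) + 1) * slicerLen 1 (n + 1)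
        - (n : ℝ) * slicerLen 1 n = ((n : ℝ) + 2)⁻¹ := by
      rw [hδ, slicerLen_one, slicerLen_one]
      have h1 : ((n : ℝ) + 2) ≠ 0 := by positivity
      have h2 : (((n : ℕ) + 1 : ℕ) : ℝ) + 2 ≠ 0 := by positivity
      push_cast
      ring
    rw [slicerPhi] at ih ⊢
    rw [hsum, hharm]
    push_cast at ih ⊢
    linear_combination ih + 2 * (m₁ : ℝ) * (m₂ : ℝ) * key

theorem slicer_phi_m1m2_fixed_log (α : ℝ) (hα : α = 1)
    (m₁ m₂ : ℕ) (hm₁ : 1 ≤ m₁) (h12 : m₁ ≤ m₂) :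
    Tendsto (fun m₃ : ℕ => slicerPhi α m₁ m₂ m₃ / Real.log m₃) atTop
      (𝓝 (2 * m₁ * m₂)) := by
  subst hα
  set K : ℝ := 2 * ∑ k ∈ Finset.Icc 1 m₁, (k : ℝ) ^ 3 * slicerDelta 1 k
          + 2 * (m₁ : ℝ) * ∑ k ∈ Finset.Icc (m₁ + 1) m₂, (k : ℝ) ^ 2 * slicerDelta 1 k
          + 2 * (m₁ : ℝ) * (m₂ : ℝ) * ((m₂ : ℝ) * slicerLen 1 m₂ - (harmonic (m₂ + 1) : ℝ)) with hK
  set M : ℝ := 2 * (m₁ : ℝ) * (m₂ : ℝ) with hM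
  -- the auxiliary limits
  have hloginv : Tendsto (fun n : ℕ => (Real.log n)⁻¹) atTop (𝓝 0) :=
    (Real.tendsto_log_atTop.comp tendsto_natCast_atTop_atTop).inv_tendsto_atTop
  have hharm : Tendsto (fun n : ℕ => (harmonic (n + 1) : ℝ) - Real.log (n + 1)) atTop
      (𝓝 Real.eulerMascheroniConstant) := by
    have := Real.tendsto_harmonic_sub_log.comp (tendsto_add_atTop_nat 1)
    refine this.congr fun n => ?_
    simp only [Function.comp_apply]
    push_cast
    ring_nf
  have hlogdiff : Tendsto (fun n : ℕ => Real.log (n + 1) - Real.log n) atTop (𝓝 0) := by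
    have h1 : Tendsto (fun n : ℕ => 1 + (n : ℝ)⁻¹) atTop (𝓝 1) := by
      simpa using tendsto_const_nhds.add (tendsto_inv_atTop_nhds_zero_nat (𝕜 := ℝ))
    have := ((Real.continuousAt_log one_ne_zero).tendsto.comp h1)
    rw [Real.log_one] at this
    refine this.congr' ?_
    filter_upwards [eventually_gt_atTop 0] with n hn
    have hn' : (0:ℝ) < n := by exact_mod_cast hn
    rw [Function.comp, ← Real.log_div (by positivity) hn'.ne']
    congr 1
    field_simp
  -- combine
  have hbracket : Tendsto (fun n : ℕ =>
      (K + M * ((harmonic (n + 1) : ℝ) - Real.log (n + 1))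
        + M * (Real.log (n + 1) - Real.log n)) * (Real.log n)⁻¹ + M) atTop (𝓝 M) := by
    have : Tendsto (fun n : ℕ =>
        (K + M * ((harmonic (n + 1) : ℝ) - Real.log (n + 1))
          + M * (Real.log (n + 1) - Real.log n)) * (Real.log n)⁻¹) atTop (𝓝 0) := by
      have hb : Tendsto (fun n : ℕ =>
          K + M * ((harmonic (n + 1) : ℝ) - Real.log (n + 1))
            + M * (Real.log (n + 1) - Real.log n)) atTop
          (𝓝 (K + M * Real.eulerMascheroniConstant + M * 0)) :=
        ((tendsto_const_nhds.add (hharm.const_mul M)).add (hlogdiff.const_mul M))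
      simpa using hb.mul hloginv
    simpa using this.add (tendsto_const_nhds : Tendsto (fun _ : ℕ => M) atTop (𝓝 M))
  refine hbracket.congr' ?_
  filter_upwards [eventually_ge_atTop (max m₂ 2)] with n hn
  have hn2 : (2 : ℕ) ≤ n := le_of_max_le_right hn
  have hnm : m₂ ≤ n := le_of_max_le_left hn
  have hlogpos : 0 < Real.log n := by
    apply Real.log_pos
    exact_mod_cast by omega
  rw [slicerPhi_eq m₁ m₂ n hnm, ← hK]
  field_simp [hlogpos.ne']
  ring
end

section
/- Let α > 1 and fix natural numbers m₁ ≤ m₂ with m₁ ≥ 1. Then the 3-point position autocorrelation function of the slicer map converges: there exists a finite real number C such that φ_α(m₁, m₂, m₃) → C as m₃ → ∞. -/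
open Filter Topology

lemma slicer_telescope (α : ℝ) (m₂ : ℕ) :
    ∀ N : ℕ, m₂ ≤ N →
      ∑ k ∈ Finset.Icc (m₂ + 1) N, (k : ℝ) * slicerDelta α k + (N : ℝ) * slicerLen α N
        = (m₂ : ℝ) * slicerLen α m₂ + ∑ k ∈ Finset.Ico m₂ N, slicerLen α k := by
  intro N hN
  induction N, hN using Nat.le_induction with
  | base =>
    simp [Finset.Icc_eq_empty (by omega : ¬ m₂ + 1 ≤ m₂)]
  | succ N hN ih =>
    rw [Finset.sum_Icc_succ_top (by omega : m₂ + 1 ≤ N + 1),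
      Finset.sum_Ico_succ_top hN]
    have hΔ : slicerDelta α (N + 1) = slicerLen α N - slicerLen α (N + 1) := by
      simp [slicerDelta]
    rw [hΔ]
    push_cast
    linarith [ih]

theorem slicer_phi_m1m2_fixed_const (α : ℝ) (hα : 1 < α)
    (m₁ m₂ : ℕ) (hm₁ : 1 ≤ m₁) (h12 : m₁ ≤ m₂) :
    ∃ C : ℝ, Tendsto (fun m₃ : ℕ => slicerPhi α m₁ m₂ m₃) atTop (𝓝 C) := by
  have hc0 : (0:ℝ) < (2 : ℝ) ^ (1 / α) := Real.rpow_pos_of_pos two_pos _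
  have hlen_nonneg : ∀ n : ℕ, 0 ≤ slicerLen α n := fun n =>
    Real.rpow_nonneg (by positivity) _
  have hsum : Summable (slicerLen α) := by
    rw [← summable_nat_add_iff 1]
    have hbig : Summable (fun n : ℕ => ((n : ℝ) + 1) ^ (-α)) := by
      have h1 := (summable_nat_add_iff 1).mpr
        (Real.summable_nat_rpow.mpr (by linarith : -α < -1))
      simpa [Nat.cast_add, Nat.cast_one] using h1
    refine Summable.of_nonneg_of_le (fun n => hlen_nonneg _) (fun n => ?_) hbig
    unfold slicerLen
    apply Real.rpow_le_rpow_of_nonpos (by positivity)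
    · push_cast; linarith
    · linarith
  -- limit of partial sums over Ico m₂ N
  have hT : Tendsto (fun N : ℕ => ∑ k ∈ Finset.range N, slicerLen α k) atTop
      (𝓝 (∑' k, slicerLen α k)) := hsum.hasSum.tendsto_sum_nat
  have hIco : Tendsto (fun N : ℕ => ∑ k ∈ Finset.Ico m₂ N, slicerLen α k) atTop
      (𝓝 ((∑' k, slicerLen α k) - ∑ k ∈ Finset.range m₂, slicerLen α k)) := by
    have := hT.sub_const (∑ k ∈ Finset.range m₂, slicerLen α k)
    refine this.congr' ?_
    filter_upwards [eventually_ge_atTop m₂] with N hN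
    rw [Finset.sum_Ico_eq_sub _ hN]
  set A : ℝ := 2 * ∑ k ∈ Finset.Icc 1 m₁, (k : ℝ) ^ 3 * slicerDelta α k
    + 2 * (m₁ : ℝ) * ∑ k ∈ Finset.Icc (m₁ + 1) m₂, (k : ℝ) ^ 2 * slicerDelta α k with hA
  set B : ℝ := 2 * (m₁ : ℝ) * (m₂ : ℝ) with hB
  refine ⟨A + B * ((m₂ : ℝ) * slicerLen α m₂
    + ((∑' k, slicerLen α k) - ∑ k ∈ Finset.range m₂, slicerLen α k)), ?_⟩
  have hlim := (((hIco.const_add ((m₂ : ℝ) * slicerLen α m₂)).const_mul B).const_add A)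
  refine hlim.congr' ?_
  filter_upwards [eventually_ge_atTop m₂] with N hN
  have htel := slicer_telescope α m₂ N hN
  simp only [slicerPhi, hA, hB]
  rw [← htel]; ring
end

section
/- Let 0 < α < 2, fix a natural number m₁ ≥ 1 and a natural number ξ ≥ 0. Then the 3-point position autocorrelation function of the slicer map with constant final time lag satisfies φ_α(m₁, m₂, m₂ + ξ) / m₂^{2-α} → 4·m₁/(2-α) as m₂ → ∞. -/
open Filter Topology

/-- MVT for rpow on a unit interval. -/
lemma rpow_mvt (p a : ℝ) (ha : 0 < a) :
    ∃ ξ : ℝ, a < ξ ∧ ξ < a + 1 ∧ (a+1)^p - a^p = p * ξ^(p-1) := by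
  have hab : a < a + 1 := by linarith
  have hcont : ContinuousOn (fun x : ℝ => x ^ p) (Set.Icc a (a+1)) := by
    intro x hx
    exact (Real.continuousAt_rpow_const x p (Or.inl (ne_of_gt (lt_of_lt_of_le ha hx.1)))).continuousWithinAt
  have hderiv : ∀ x ∈ Set.Ioo a (a+1), HasDerivAt (fun x : ℝ => x ^ p) (p * x ^ (p-1)) x := by
    intro x hx
    have := Real.hasDerivAt_rpow_const (x := x) (p := p) (Or.inl (ne_of_gt (lt_trans ha hx.1)))
    simpa [mul_comm] using this
  obtain ⟨ξ, hξ, heq⟩ := exists_hasDerivAt_eq_slope (fun x : ℝ => x ^ p)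
    (fun x => p * x ^ (p-1)) hab hcont hderiv
  refine ⟨ξ, hξ.1, hξ.2, ?_⟩
  rw [heq]; simp

lemma aux_tendsto (p d : ℝ) (hp : 0 < p) (hd : 0 ≤ d) :
    Tendsto (fun m : ℕ => (((m:ℝ)+d)^p - d^p)/p / (m:ℝ)^p) atTop (𝓝 (1/p)) := by
  have h1 : Tendsto (fun m : ℕ => (1 + d/(m:ℝ))^p) atTop (𝓝 1) := by
    have : Tendsto (fun m : ℕ => 1 + d/(m:ℝ)) atTop (𝓝 1) := by
      have := (tendsto_const_nhds (x := d) (f := atTop (α := ℕ))).div_atTop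
        (tendsto_natCast_atTop_atTop (R := ℝ))
      simpa using (tendsto_const_nhds (x := (1:ℝ)) (f := atTop (α := ℕ))).add this
    have hc := (Real.continuousAt_rpow_const 1 p (Or.inl one_ne_zero)).tendsto
    simpa [Function.comp_def] using hc.comp this
  have h2 : Tendsto (fun m : ℕ => d^p / (m:ℝ)^p) atTop (𝓝 0) := by
    apply (tendsto_const_nhds (x := d^p) (f := atTop (α := ℕ))).div_atTop
    exact (tendsto_rpow_atTop hp).comp (tendsto_natCast_atTop_atTop (R := ℝ))
  have h3 : Tendsto (fun m : ℕ => ((1 + d/(m:ℝ))^p - d^p/(m:ℝ)^p)/p) atTop (𝓝 (1/p)) := by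
    have := (h1.sub h2).div_const p
    simpa using this
  apply h3.congr'
  filter_upwards [eventually_ge_atTop 1] with m hm
  have hm0 : (0:ℝ) < (m:ℝ) := by exact_mod_cast hm
  have key : ((m:ℝ)+d)^p / (m:ℝ)^p = (1 + d/(m:ℝ))^p := by
    rw [← Real.div_rpow (by linarith) hm0.le]
    · congr 1
      field_simp
  rw [← key]
  ring


lemma per_term (p c : ℝ) (hp : 0 < p) (hc : 1 < c) (k : ℕ) :
    ∃ ξ η : ℝ, ((k:ℝ)+c < ξ ∧ ξ < (k:ℝ)+c+1 ∧
      ((((k+1:ℕ):ℝ)+c)^p - (((k:ℕ):ℝ)+c)^p)/p = ξ^(p-1)) ∧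
      ((k:ℝ)+(c-1) < η ∧ η < (k:ℝ)+c ∧
      ((((k+1:ℕ):ℝ)+(c-1))^p - (((k:ℕ):ℝ)+(c-1))^p)/p = η^(p-1)) := by
  have hk : (0:ℝ) ≤ (k:ℝ) := Nat.cast_nonneg k
  obtain ⟨ξ, hξ1, hξ2, hξ3⟩ := rpow_mvt p ((k:ℝ)+c) (by linarith)
  obtain ⟨η, hη1, hη2, hη3⟩ := rpow_mvt p ((k:ℝ)+(c-1)) (by linarith)
  refine ⟨ξ, η, ⟨hξ1, hξ2, ?_⟩, ⟨hη1, by linarith, ?_⟩⟩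
  · have : (((k+1:ℕ):ℝ)+c) = ((k:ℝ)+c)+1 := by push_cast; ring
    rw [this, hξ3, mul_div_cancel_left₀ _ hp.ne']
  · have : (((k+1:ℕ):ℝ)+(c-1)) = ((k:ℝ)+(c-1))+1 := by push_cast; ring
    rw [this, hη3, mul_div_cancel_left₀ _ hp.ne']

lemma key_sum (p c : ℝ) (hp : 0 < p) (hc : 1 < c) :
    Tendsto (fun m : ℕ => (∑ k ∈ Finset.range m, ((k:ℝ)+c)^(p-1)) / (m:ℝ)^p)
      atTop (𝓝 (1/p)) := by
  have hG : ∀ m : ℕ, ∑ k ∈ Finset.range m,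
      ((((k+1:ℕ):ℝ)+c)^p - (((k:ℕ):ℝ)+c)^p)/p = (((m:ℝ)+c)^p - c^p)/p := by
    intro m
    rw [← Finset.sum_div, Finset.sum_range_sub (fun n : ℕ => ((n:ℝ)+c)^p)]
    norm_num
  have hF : ∀ m : ℕ, ∑ k ∈ Finset.range m,
      ((((k+1:ℕ):ℝ)+(c-1))^p - (((k:ℕ):ℝ)+(c-1))^p)/p = (((m:ℝ)+(c-1))^p - (c-1)^p)/p := by
    intro m
    rw [← Finset.sum_div, Finset.sum_range_sub (fun n : ℕ => ((n:ℝ)+(c-1))^p)]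
    norm_num
  have hkpos : ∀ k : ℕ, (0:ℝ) < (k:ℝ)+(c-1) := fun k => by
    have := Nat.cast_nonneg (α := ℝ) k; linarith
  have hkpos' : ∀ k : ℕ, (0:ℝ) < (k:ℝ)+c := fun k => by
    have := Nat.cast_nonneg (α := ℝ) k; linarith
  rcases le_total p 1 with hp1 | hp1
  · have low : ∀ m : ℕ, (((m:ℝ)+c)^p - c^p)/p ≤ ∑ k ∈ Finset.range m, ((k:ℝ)+c)^(p-1) := by
      intro m
      rw [← hG m]
      apply Finset.sum_le_sum
      intro k _
      obtain ⟨ξ, η, ⟨h1, h2, h3⟩, -⟩ := per_term p c hp hc k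
      rw [h3]
      exact Real.rpow_le_rpow_of_nonpos (hkpos' k) h1.le (by linarith)
    have high : ∀ m : ℕ, ∑ k ∈ Finset.range m, ((k:ℝ)+c)^(p-1)
        ≤ (((m:ℝ)+(c-1))^p - (c-1)^p)/p := by
      intro m
      rw [← hF m]
      apply Finset.sum_le_sum
      intro k _
      obtain ⟨ξ, η, -, ⟨h1, h2, h3⟩⟩ := per_term p c hp hc k
      rw [h3]
      exact Real.rpow_le_rpow_of_nonpos ((hkpos k).trans h1) h2.le (by linarith)
    apply tendsto_of_tendsto_of_tendsto_of_le_of_le (aux_tendsto p c hp (by linarith))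
      (aux_tendsto p (c-1) hp (by linarith)) <;> intro m <;> dsimp only <;> gcongr
    exacts [low m, high m]
  · have low : ∀ m : ℕ, (((m:ℝ)+(c-1))^p - (c-1)^p)/p ≤ ∑ k ∈ Finset.range m, ((k:ℝ)+c)^(p-1) := by
      intro m
      rw [← hF m]
      apply Finset.sum_le_sum
      intro k _
      obtain ⟨ξ, η, -, ⟨h1, h2, h3⟩⟩ := per_term p c hp hc k
      rw [h3]
      exact Real.rpow_le_rpow ((hkpos k).trans h1).le h2.le (by linarith)
    have high : ∀ m : ℕ, ∑ k ∈ Finset.range m, ((k:ℝ)+c)^(p-1)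
        ≤ (((m:ℝ)+c)^p - c^p)/p := by
      intro m
      rw [← hG m]
      apply Finset.sum_le_sum
      intro k _
      obtain ⟨ξ, η, ⟨h1, h2, h3⟩, -⟩ := per_term p c hp hc k
      rw [h3]
      exact Real.rpow_le_rpow (hkpos' k).le h1.le (by linarith)
    apply tendsto_of_tendsto_of_tendsto_of_le_of_le (aux_tendsto p (c-1) hp (by linarith))
      (aux_tendsto p c hp (by linarith)) <;> intro m <;> dsimp only <;> gcongr
    exacts [low m, high m]


lemma delta_succ (α : ℝ) (k : ℕ) :
    slicerDelta α (k+1) = slicerLen α k - slicerLen α (k+1) := by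
  simp [slicerDelta]

lemma tail_identity (α : ℝ) (m ξ : ℕ) :
    ∑ k ∈ Finset.Icc (m+1) (m+ξ), (k:ℝ) * slicerDelta α k
      + ((m+ξ:ℕ):ℝ) * slicerLen α (m+ξ)
    = (m:ℝ) * slicerLen α m + ∑ k ∈ Finset.Ico m (m+ξ), slicerLen α k := by
  induction ξ with
  | zero => simp
  | succ n ih =>
    have h1 : m + 1 ≤ m + n + 1 := by omega
    have h2 : m ≤ m + n := by omega
    rw [show m + (n+1) = (m+n) + 1 from rfl, Finset.sum_Icc_succ_top h1,
      Finset.sum_Ico_succ_top h2, delta_succ]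
    push_cast
    push_cast at ih
    linarith

lemma main_identity (α : ℝ) (m₁ : ℕ) : ∀ m : ℕ, m₁ ≤ m →
    ∑ k ∈ Finset.Icc (m₁+1) m, (k:ℝ)^2 * slicerDelta α k
    = (m₁:ℝ)^2 * slicerLen α m₁ - (m:ℝ)^2 * slicerLen α m
      + ∑ k ∈ Finset.Ico m₁ m, (2*(k:ℝ)+1) * slicerLen α k := by
  intro m hm
  induction m, hm using Nat.le_induction with
  | base => simp
  | succ n hn ih =>
    have h1 : m₁ + 1 ≤ n + 1 := by omega
    rw [Finset.sum_Icc_succ_top h1, Finset.sum_Ico_succ_top hn, delta_succ, ih]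
    push_cast
    ring

theorem slicer_phi_m1_fixed (α : ℝ) (hα : 0 < α) (hα2 : α < 2)
    (m₁ : ℕ) (hm₁ : 1 ≤ m₁) (ξ : ℕ) :
    Tendsto (fun m₂ : ℕ => slicerPhi α m₁ m₂ (m₂ + ξ) / (m₂ : ℝ) ^ (2 - α)) atTop
      (𝓝 (4 * m₁ / (2 - α))) := by
  have hq : (0:ℝ) < 2 - α := by linarith
  set c : ℝ := (2:ℝ) ^ (1/α) with hcdef
  have hc : 1 < c := by
    rw [hcdef]
    exact (Real.one_lt_rpow_iff_of_pos (by norm_num)).mpr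
      (Or.inl ⟨one_lt_two, one_div_pos.mpr hα⟩)
  have hc0 : (0:ℝ) < c := by linarith
  have hlen : ∀ k : ℕ, slicerLen α k = ((k:ℝ)+c)^(-α) := fun k => rfl
  have hkc : ∀ k : ℕ, (0:ℝ) < (k:ℝ)+c := fun k => by
    have := Nat.cast_nonneg (α := ℝ) k; linarith
  -- the three sums as functions
  set G : ℕ → ℝ := fun m => ∑ k ∈ Finset.range m, (2*(k:ℝ)+1) * slicerLen α k with hG
  set E : ℕ → ℝ := fun m => ∑ k ∈ Finset.range m, ((k:ℝ)+c)^((2-α)-1) with hE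
  set R : ℕ → ℝ := fun m => ∑ k ∈ Finset.range m, ((k:ℝ)+c)^(-α) with hRdef
  set E₂ : ℕ → ℝ := fun m => ∑ k ∈ Finset.range m, ((k:ℝ)+c)^((1-α/2)-1) with hE2def
  set S : ℕ → ℝ := fun m => ∑ k ∈ Finset.Ico m (m+ξ), slicerLen α k with hS
  set C' : ℝ := 2 * ∑ k ∈ Finset.Icc 1 m₁, (k : ℝ) ^ 3 * slicerDelta α k
      + 2 * (m₁:ℝ) * ((m₁:ℝ)^2 * slicerLen α m₁)
      - 2 * (m₁:ℝ) * ∑ k ∈ Finset.range m₁, (2*(k:ℝ)+1) * slicerLen α k with hC'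
  -- splitting of G
  have hsplit : ∀ m : ℕ, G m = 2 * E m + (1-2*c) * R m := by
    intro m
    rw [hG, hE, hRdef]
    simp only [Finset.mul_sum, ← Finset.sum_add_distrib]
    apply Finset.sum_congr rfl
    intro k _
    have h1 : ((k:ℝ)+c)^((2-α)-1) = ((k:ℝ)+c) * ((k:ℝ)+c)^(-α) := by
      rw [show (2-α)-1 = 1 + (-α) by ring, Real.rpow_add (hkc k), Real.rpow_one]
    rw [hlen, h1]
    ring
  -- limit of E/m^(2-α)
  have hElim := key_sum (2-α) c hq hc
  -- limit of R/m^(2-α)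
  have hRlim : Tendsto (fun m : ℕ => R m / (m:ℝ)^(2-α)) atTop (𝓝 0) := by
    have hp' : (0:ℝ) < 1 - α/2 := by linarith
    have hE2lim := key_sum (1-α/2) c hp' hc
    have hpow0 : Tendsto (fun m : ℕ => ((m:ℝ))^(-(1-α/2))) atTop (𝓝 0) :=
      (tendsto_rpow_neg_atTop hp').comp tendsto_natCast_atTop_atTop
    have hb : Tendsto (fun m : ℕ =>
        c^(-(α/2)) * ((E₂ m / (m:ℝ)^(1-α/2)) * (m:ℝ)^(-(1-α/2)))) atTop (𝓝 0) := by
      have h := (hE2lim.mul hpow0).const_mul (c^(-(α/2)))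
      simpa only [mul_zero] using h
    have hRE : ∀ m : ℕ, R m ≤ c^(-(α/2)) * E₂ m := by
      intro m
      rw [hRdef, hE2def, Finset.mul_sum]
      apply Finset.sum_le_sum
      intro k _
      have h1 : ((k:ℝ)+c)^(-α) = ((k:ℝ)+c)^(-(α/2)) * ((k:ℝ)+c)^((1-α/2)-1) := by
        rw [← Real.rpow_add (hkc k)]
        congr 1; ring
      rw [h1]
      refine mul_le_mul_of_nonneg_right ?_ (Real.rpow_nonneg (hkc k).le _)
      exact Real.rpow_le_rpow_of_nonpos hc0 (by have := Nat.cast_nonneg (α := ℝ) k; linarith)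
        (by linarith)
    have hRnn : ∀ m : ℕ, 0 ≤ R m := by
      intro m
      apply Finset.sum_nonneg
      intro k _
      exact Real.rpow_nonneg (hkc k).le _
    apply tendsto_of_tendsto_of_tendsto_of_le_of_le' tendsto_const_nhds hb
    · filter_upwards with m
      exact div_nonneg (hRnn m) (Real.rpow_nonneg (Nat.cast_nonneg m) _)
    · filter_upwards [eventually_ge_atTop 1] with m hm
      have hm0 : (0:ℝ) < (m:ℝ) := by exact_mod_cast hm
      have h2 : (m:ℝ)^(1-α/2) * (m:ℝ)^(1-α/2) = (m:ℝ)^(2-α) := by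
        rw [← Real.rpow_add hm0]; ring_nf
      have key : c^(-(α/2)) * ((E₂ m / (m:ℝ)^(1-α/2)) * (m:ℝ)^(-(1-α/2)))
          = (c^(-(α/2)) * E₂ m) / (m:ℝ)^(2-α) := by
        rw [Real.rpow_neg hm0.le, show E₂ m / (m:ℝ)^(1-α/2) * ((m:ℝ)^(1-α/2))⁻¹
          = E₂ m / ((m:ℝ)^(1-α/2) * (m:ℝ)^(1-α/2)) from by ring, h2, mul_div_assoc]
      rw [key]
      gcongr
      exact hRE m
  -- main piece
  have hB : Tendsto (fun m : ℕ => 2 * (m₁:ℝ) * G m / (m:ℝ)^(2-α)) atTop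
      (𝓝 (4 * (m₁:ℝ) / (2-α))) := by
    have h := ((hElim.const_mul 2).add (hRlim.const_mul (1-2*c))).const_mul (2*(m₁:ℝ))
    have heq : ∀ m : ℕ, 2 * (m₁:ℝ) * (2 * (E m / (m:ℝ)^(2-α)) + (1-2*c) * (R m / (m:ℝ)^(2-α)))
        = 2 * (m₁:ℝ) * G m / (m:ℝ)^(2-α) := by
      intro m
      rw [hsplit m]
      ring
    have h2 := h.congr heq
    convert h2 using 2
    field_simp
    ring
  -- constant piece
  have hA : Tendsto (fun m : ℕ => C' / (m:ℝ)^(2-α)) atTop (𝓝 0) :=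
    tendsto_const_nhds.div_atTop ((tendsto_rpow_atTop hq).comp tendsto_natCast_atTop_atTop)
  -- tail piece
  have hC : Tendsto (fun m : ℕ => 2 * (m₁:ℝ) * (m:ℝ) * S m / (m:ℝ)^(2-α)) atTop (𝓝 0) := by
    have hu : Tendsto (fun m : ℕ => 2 * (m₁:ℝ) * (ξ:ℝ) * ((m:ℝ))⁻¹) atTop (𝓝 0) := by
      have := (tendsto_inv_atTop_zero.comp (tendsto_natCast_atTop_atTop (R := ℝ))).const_mul
        (2 * (m₁:ℝ) * (ξ:ℝ))
      simpa using this
    have hSnn : ∀ m : ℕ, 0 ≤ S m := by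
      intro m
      apply Finset.sum_nonneg
      intro k _
      rw [hlen]
      exact Real.rpow_nonneg (hkc k).le _
    apply tendsto_of_tendsto_of_tendsto_of_le_of_le' tendsto_const_nhds hu
    · filter_upwards with m
      refine div_nonneg ?_ (Real.rpow_nonneg (Nat.cast_nonneg m) _)
      have := hSnn m
      positivity
    · filter_upwards [eventually_ge_atTop 1] with m hm
      have hm0 : (0:ℝ) < (m:ℝ) := by exact_mod_cast hm
      have hSle : S m ≤ (ξ:ℝ) * (m:ℝ)^(-α) := by
        rw [hS]
        calc ∑ k ∈ Finset.Ico m (m+ξ), slicerLen α k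
            ≤ ∑ _k ∈ Finset.Ico m (m+ξ), (m:ℝ)^(-α) := by
              apply Finset.sum_le_sum
              intro k hk
              rw [hlen]
              apply Real.rpow_le_rpow_of_nonpos hm0 _ (by linarith)
              have hk' : m ≤ k := (Finset.mem_Ico.mp hk).1
              have : (m:ℝ) ≤ (k:ℝ) := by exact_mod_cast hk'
              linarith
          _ = (ξ:ℝ) * (m:ℝ)^(-α) := by
              rw [Finset.sum_const, Nat.card_Ico, nsmul_eq_mul]
              congr 2
              omega
      have hiden : (m:ℝ) * (m:ℝ)^(-α) / (m:ℝ)^(2-α) = ((m:ℝ))⁻¹ := by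
        have h1 : (m:ℝ) * (m:ℝ)^(-α) = (m:ℝ)^(1-α) := by
          rw [show (1:ℝ)-α = 1 + (-α) by ring, Real.rpow_add hm0, Real.rpow_one]
        rw [h1, ← Real.rpow_sub hm0, show (1:ℝ)-α-(2-α) = -1 by ring, Real.rpow_neg_one]
      calc 2 * (m₁:ℝ) * (m:ℝ) * S m / (m:ℝ)^(2-α)
          ≤ 2 * (m₁:ℝ) * (m:ℝ) * ((ξ:ℝ) * (m:ℝ)^(-α)) / (m:ℝ)^(2-α) := by
            gcongr
        _ = 2 * (m₁:ℝ) * (ξ:ℝ) * ((m:ℝ) * (m:ℝ)^(-α) / (m:ℝ)^(2-α)) := by ring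
        _ = 2 * (m₁:ℝ) * (ξ:ℝ) * ((m:ℝ))⁻¹ := by rw [hiden]
  -- assemble
  have htot := (hA.add hB).add hC
  have hfinal : Tendsto (fun m : ℕ =>
      (C' + 2 * (m₁:ℝ) * G m + 2 * (m₁:ℝ) * (m:ℝ) * S m) / (m:ℝ)^(2-α)) atTop
      (𝓝 (4 * (m₁:ℝ) / (2-α))) := by
    have := htot.congr (f₂ := fun m : ℕ =>
      (C' + 2 * (m₁:ℝ) * G m + 2 * (m₁:ℝ) * (m:ℝ) * S m) / (m:ℝ)^(2-α)) (fun m => by ring)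
    simpa using this
  apply hfinal.congr'
  filter_upwards [eventually_ge_atTop m₁] with m hm
  congr 1
  -- numerator identity
  have ht := tail_identity α m ξ
  rw [slicerPhi, main_identity α m₁ m hm,
    Finset.sum_Ico_eq_sub (fun k => (2*(k:ℝ)+1) * slicerLen α k) hm]
  simp only [hC', hG, hS]
  push_cast
  push_cast at ht
  linear_combination (-2*(m₁:ℝ)*(m:ℝ)) * ht
end

section
/- Let α = 2, fix a natural number m₁ ≥ 1 and a natural number ξ ≥ 0. Then the 3-point position autocorrelation function of the slicer map with constant final time lag satisfies φ_α(m₁, m₂, m₂ + ξ) / log m₂ → 4·m₁ as m₂ → ∞, where log denotes the natural logarithm. -/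
open Filter Topology

namespace SlicerAux

noncomputable def c : ℝ := Real.sqrt 2

lemma hc0 : (0:ℝ) ≤ c := Real.sqrt_nonneg 2
lemma hcsq : c ^ 2 = 2 := Real.sq_sqrt (by norm_num)
lemma hc1 : 1 ≤ c := by nlinarith [hc0, hcsq]
lemma hclb : (1.41:ℝ) ≤ c := by nlinarith [hc0, hcsq]
lemma hcub : c ≤ (1.42:ℝ) := by nlinarith [hc0, hcsq]

lemma len_eq (M : ℕ) : slicerLen 2 M = (((M:ℝ) + c) ^ 2)⁻¹ := by
  have h0' : (0:ℝ) ≤ (M:ℝ) + Real.sqrt 2 := by positivity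
  unfold slicerLen c
  rw [← Real.sqrt_eq_rpow, Real.rpow_neg h0',
    show ((2:ℝ)) = ((2:ℕ):ℝ) by norm_num, Real.rpow_natCast]

lemma len_pos (M : ℕ) : 0 < slicerLen 2 M := by
  rw [len_eq]
  have : (0:ℝ) < (M:ℝ) + c := by have := hc1; positivity
  positivity

lemma delta_eq (k : ℕ) (hk : 1 ≤ k) :
    slicerDelta 2 k = (((k:ℝ) - 1 + c) ^ 2)⁻¹ - (((k:ℝ) + c) ^ 2)⁻¹ := by
  unfold slicerDelta
  rw [len_eq, len_eq]
  have : ((k - 1 : ℕ) : ℝ) = (k:ℝ) - 1 := by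
    have := Nat.cast_sub hk (R := ℝ); simpa using this
  rw [this]

lemma delta_nonneg (k : ℕ) : 0 ≤ slicerDelta 2 k := by
  unfold slicerDelta
  rw [len_eq, len_eq, sub_nonneg]
  have h1 : (0:ℝ) < ((k - 1 : ℕ):ℝ) + c := by have := hc1; positivity
  have h2 : ((k - 1 : ℕ):ℝ) ≤ (k:ℝ) := Nat.cast_le.mpr (Nat.sub_le k 1)
  gcongr

lemma tel (H : ℕ → ℝ) {u m : ℕ} (h : u ≤ m) :
    ∑ k ∈ Finset.Icc (u+1) m, (H k - H (k-1)) = H m - H u := by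
  induction m, h using Nat.le_induction with
  | base => simp [Finset.Icc_eq_empty (by omega : ¬ u + 1 ≤ u)]
  | succ m hm ih =>
    rw [Finset.sum_Icc_succ_top (by omega), ih]
    simp only [Nat.add_sub_cancel]
    ring

/-- Core upper bound over the reals. -/
lemma core_le (x : ℝ) (hx : 2 ≤ x) :
    x^2 * (((x - 1 + c)^2)⁻¹ - ((x + c)^2)⁻¹)
      ≤ (2*Real.log x - x⁻¹) - (2*Real.log (x - 1) - (x - 1)⁻¹) := by
  have hc1 : (1:ℝ) ≤ c := hc1
  have ha : (0:ℝ) < x - 1 + c := by linarith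
  have hb : (0:ℝ) < x + c := by linarith
  have hx0 : (0:ℝ) < x := by linarith
  have h1 : (0:ℝ) < x - 1 := by linarith
  have step1 : x^2 * (((x - 1 + c)^2)⁻¹ - ((x + c)^2)⁻¹) ≤ 2 * x⁻¹ + (x⁻¹)^2 := by
    have hΔ : ((x - 1 + c)^2)⁻¹ - ((x + c)^2)⁻¹
        = (2*x - 1 + 2*c) / ((x - 1 + c)^2 * (x + c)^2) := by
      field_simp; ring
    rw [hΔ]
    have hr : 2 * x⁻¹ + (x⁻¹)^2 = (2*x + 1) / x^2 := by field_simp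
    rw [hr, mul_div_assoc', div_le_div_iff₀ (by positivity) (by positivity)]
    nlinarith [mul_nonneg (mul_nonneg (by linarith : (0:ℝ) ≤ (x - 1 + c) - x)
        (by nlinarith : (0:ℝ) ≤ 2*(x-1+c)*x + (x-1+c) + x)) (sq_nonneg (x+c)),
      mul_nonneg (mul_nonneg (by linarith : (0:ℝ) ≤ 2*x - 1 + 2*c)
        (by nlinarith : (0:ℝ) ≤ (x+c)^2 - x^2)) (sq_nonneg x)]
  have step2 : x⁻¹ ≤ Real.log x - Real.log (x - 1) := by
    have h := Real.log_le_sub_one_of_pos (show (0:ℝ) < (x-1)/x by positivity)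
    rw [Real.log_div (by linarith) (by linarith)] at h
    have e : (x - 1)/x - 1 = -x⁻¹ := by field_simp; ring
    rw [e] at h
    linarith
  have step3 : (x⁻¹)^2 ≤ (x - 1)⁻¹ - x⁻¹ := by
    have e : (x - 1)⁻¹ - x⁻¹ = ((x - 1) * x)⁻¹ := by field_simp; ring
    rw [e, show (x⁻¹)^2 = (x*x)⁻¹ by rw [sq, mul_inv]]
    apply inv_anti₀ (by positivity)
    nlinarith
  linarith

/-- Core lower bound over the reals. -/
lemma core_ge (x : ℝ) (hx : 1 ≤ x) :
    2*Real.log (x + 7) - 2*Real.log (x + 6)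
      ≤ x^2 * (((x - 1 + c)^2)⁻¹ - ((x + c)^2)⁻¹) := by
  have hc1 : (1:ℝ) ≤ c := hc1
  have ha : (0:ℝ) < x - 1 + c := by linarith
  have hb : (0:ℝ) < x + c := by linarith
  have step1 : Real.log (x + 7) - Real.log (x + 6) ≤ (x + 6)⁻¹ := by
    have h := Real.log_le_sub_one_of_pos (show (0:ℝ) < (x+7)/(x+6) by positivity)
    rw [Real.log_div (by linarith) (by linarith)] at h
    have e : (x + 7)/(x + 6) - 1 = (x + 6)⁻¹ := by field_simp; ring
    rw [e] at h
    linarith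
  have step2 : 2 * (x + 6)⁻¹ ≤ x^2 * (((x - 1 + c)^2)⁻¹ - ((x + c)^2)⁻¹) := by
    have hΔ : ((x - 1 + c)^2)⁻¹ - ((x + c)^2)⁻¹
        = (2*x - 1 + 2*c) / ((x - 1 + c)^2 * (x + c)^2) := by
      field_simp; ring
    rw [hΔ, mul_div_assoc', show (2:ℝ) * (x+6)⁻¹ = 2 / (x+6) by ring,
      div_le_div_iff₀ (by positivity) (by positivity)]
    nlinarith [mul_nonneg (mul_nonneg (by linarith : (0:ℝ) ≤ x - 1) (by linarith : (0:ℝ) ≤ x - 1)) (by linarith : (0:ℝ) ≤ x - 1),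
      mul_nonneg (by linarith : (0:ℝ) ≤ x - 1) (by linarith : (0:ℝ) ≤ x - 1), sq_nonneg x,
      hcsq, hclb, hcub]
  linarith

/-- Upper pointwise bound for `k² Δ_k`. -/
lemma f_le (k : ℕ) (hk : 2 ≤ k) :
    (k:ℝ)^2 * slicerDelta 2 k
      ≤ (2*Real.log k - (k:ℝ)⁻¹) - (2*Real.log (↑(k-1)) - ((k-1:ℕ):ℝ)⁻¹) := by
  have hcast : ((k - 1 : ℕ) : ℝ) = (k:ℝ) - 1 := by
    have := Nat.cast_sub (show 1 ≤ k by omega) (R := ℝ); simpa using this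
  rw [delta_eq k (by omega), hcast]
  exact core_le (k:ℝ) (by exact_mod_cast hk)

/-- Lower pointwise bound for `k² Δ_k`. -/
lemma f_ge (k : ℕ) (hk : 1 ≤ k) :
    2*Real.log ((k:ℝ) + 7) - 2*Real.log (((k-1:ℕ):ℝ) + 7)
      ≤ (k:ℝ)^2 * slicerDelta 2 k := by
  have hcast : ((k - 1 : ℕ) : ℝ) = (k:ℝ) - 1 := by
    have := Nat.cast_sub hk (R := ℝ); simpa using this
  rw [delta_eq k hk, hcast]
  have := core_ge (k:ℝ) (by exact_mod_cast hk)
  have e : (k:ℝ) - 1 + 7 = (k:ℝ) + 6 := by ring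
  rw [e]
  exact this

/-- Upper bound for the main sum. -/
lemma S_le (m₁ m : ℕ) (h1 : 1 ≤ m₁) (h : m₁ ≤ m) :
    ∑ k ∈ Finset.Icc (m₁+1) m, (k:ℝ)^2 * slicerDelta 2 k
      ≤ 2*Real.log m + (m₁:ℝ)⁻¹ := by
  have key : ∑ k ∈ Finset.Icc (m₁+1) m, (k:ℝ)^2 * slicerDelta 2 k
      ≤ ∑ k ∈ Finset.Icc (m₁+1) m,
        ((fun k : ℕ => 2*Real.log k - (k:ℝ)⁻¹) k - (fun k : ℕ => 2*Real.log k - (k:ℝ)⁻¹) (k-1)) := by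
    apply Finset.sum_le_sum
    intro k hk
    rw [Finset.mem_Icc] at hk
    exact f_le k (by omega)
  rw [tel _ h] at key
  have hm1 : 0 ≤ Real.log m₁ := Real.log_nonneg (by exact_mod_cast h1)
  have hminv : (0:ℝ) ≤ (m:ℝ)⁻¹ := by positivity
  linarith

/-- Lower bound for the main sum. -/
lemma S_ge (m₁ m : ℕ) (h1 : 1 ≤ m₁) (h : m₁ ≤ m) :
    2*Real.log m - 2*Real.log ((m₁:ℝ) + 7)
      ≤ ∑ k ∈ Finset.Icc (m₁+1) m, (k:ℝ)^2 * slicerDelta 2 k := by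
  have key : ∑ k ∈ Finset.Icc (m₁+1) m,
        ((fun k : ℕ => 2*Real.log ((k:ℝ)+7)) k - (fun k : ℕ => 2*Real.log ((k:ℝ)+7)) (k-1))
      ≤ ∑ k ∈ Finset.Icc (m₁+1) m, (k:ℝ)^2 * slicerDelta 2 k := by
    apply Finset.sum_le_sum
    intro k hk
    rw [Finset.mem_Icc] at hk
    exact f_ge k (by omega)
  rw [tel _ h] at key
  have hmm : Real.log m ≤ Real.log ((m:ℝ) + 7) := by
    apply Real.log_le_log (by exact_mod_cast Nat.lt_of_lt_of_le Nat.zero_lt_one (h1.trans h))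
    linarith
  linarith


/-- Telescoping of the deltas. -/
lemma sum_delta (u v : ℕ) (h : u ≤ v) :
    ∑ k ∈ Finset.Icc (u+1) v, slicerDelta 2 k = slicerLen 2 u - slicerLen 2 v := by
  have key := tel (fun k => -(slicerLen 2 k)) h
  have e : ∑ k ∈ Finset.Icc (u+1) v, slicerDelta 2 k
      = ∑ k ∈ Finset.Icc (u+1) v,
        ((fun k => -(slicerLen 2 k)) k - (fun k => -(slicerLen 2 k)) (k-1)) := by
    apply Finset.sum_congr rfl
    intro k _
    simp only [slicerDelta]
    ring
  rw [e, key]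
  ring

lemma bound3 (y z : ℝ) (hy : 0 ≤ y) (hz : 0 ≤ z) :
    y * ((y + z) * (((y + c)^2))⁻¹) ≤ z + 1 := by
  have hc1 : (1:ℝ) ≤ c := hc1
  have hpos : (0:ℝ) < (y + c)^2 := by nlinarith
  rw [show y * ((y + z) * (((y + c)^2))⁻¹) = (y * (y + z)) / ((y + c)^2) by ring,
    div_le_iff₀ hpos]
  nlinarith [mul_nonneg hz (show (0:ℝ) ≤ (y + c)^2 - y by nlinarith), hcsq]

lemma bound4 (y z : ℝ) (hy : 0 ≤ y) (hz : 0 ≤ z) :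
    y * ((y + z) * (((y + z + c)^2))⁻¹) ≤ 1 := by
  have hc1 : (1:ℝ) ≤ c := hc1
  have hpos : (0:ℝ) < (y + z + c)^2 := by nlinarith
  rw [show y * ((y + z) * (((y + z + c)^2))⁻¹) = (y * (y + z)) / ((y + z + c)^2) by ring,
    div_le_iff₀ hpos]
  nlinarith [mul_nonneg hz hy, mul_nonneg hz hz, hcsq]

end SlicerAux

open SlicerAux in
theorem slicer_phi_m1_fixed_log (α : ℝ) (hα : α = 2)
    (m₁ : ℕ) (hm₁ : 1 ≤ m₁) (ξ : ℕ) :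
    Tendsto (fun m₂ : ℕ => slicerPhi α m₁ m₂ (m₂ + ξ) / Real.log m₂) atTop
      (𝓝 (4 * m₁)) := by
  subst hα
  have hc1 : (1:ℝ) ≤ c := hc1
  set D : ℝ := 2 * ∑ k ∈ Finset.Icc 1 m₁, (k:ℝ)^3 * slicerDelta 2 k with hD
  have hD0 : 0 ≤ D := by
    apply mul_nonneg (by norm_num)
    exact Finset.sum_nonneg fun k _ => mul_nonneg (by positivity) (delta_nonneg k)
  set A₁ : ℝ := 4*(m₁:ℝ)*Real.log ((m₁:ℝ)+7) with hA₁
  set A₂ : ℝ := D + 2*(m₁:ℝ)*(m₁:ℝ)⁻¹ + 2*(m₁:ℝ)*((ξ:ℝ)+1) + 2*(m₁:ℝ) with hA₂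
  -- bounds on phi for m₂ ≥ m₁
  have hphi : ∀ m₂ : ℕ, m₁ ≤ m₂ →
      4*(m₁:ℝ)*Real.log m₂ - A₁ ≤ slicerPhi 2 m₁ m₂ (m₂ + ξ) ∧
      slicerPhi 2 m₁ m₂ (m₂ + ξ) ≤ 4*(m₁:ℝ)*Real.log m₂ + A₂ := by
    intro m₂ hm₂
    have hm₁0 : (0:ℝ) ≤ 2*(m₁:ℝ) := by positivity
    -- middle sum bounds
    have hS1 := S_ge m₁ m₂ hm₁ hm₂
    have hS2 := S_le m₁ m₂ hm₁ hm₂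
    have hS1' := mul_le_mul_of_nonneg_left hS1 hm₁0
    have hS2' := mul_le_mul_of_nonneg_left hS2 hm₁0
    -- third sum bounds
    have hT3a : 0 ≤ ∑ k ∈ Finset.Icc (m₂+1) (m₂+ξ), (k:ℝ) * slicerDelta 2 k :=
      Finset.sum_nonneg fun k _ => mul_nonneg (by positivity) (delta_nonneg k)
    have hT3b : ∑ k ∈ Finset.Icc (m₂+1) (m₂+ξ), (k:ℝ) * slicerDelta 2 k
        ≤ ((m₂:ℝ) + (ξ:ℝ)) * slicerLen 2 m₂ := by
      calc ∑ k ∈ Finset.Icc (m₂+1) (m₂+ξ), (k:ℝ) * slicerDelta 2 k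
          ≤ ∑ k ∈ Finset.Icc (m₂+1) (m₂+ξ), ((m₂:ℝ) + (ξ:ℝ)) * slicerDelta 2 k := by
            apply Finset.sum_le_sum
            intro k hk
            rw [Finset.mem_Icc] at hk
            have : (k:ℝ) ≤ (m₂:ℝ) + (ξ:ℝ) := by exact_mod_cast hk.2
            exact mul_le_mul_of_nonneg_right this (delta_nonneg k)
        _ = ((m₂:ℝ) + (ξ:ℝ)) * (slicerLen 2 m₂ - slicerLen 2 (m₂+ξ)) := by
            rw [← Finset.mul_sum, sum_delta m₂ (m₂+ξ) (Nat.le_add_right _ _)]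
        _ ≤ ((m₂:ℝ) + (ξ:ℝ)) * slicerLen 2 m₂ := by
            have h1 : (0:ℝ) ≤ (m₂:ℝ) + (ξ:ℝ) := by positivity
            nlinarith [len_pos (m₂+ξ)]
    have hT3c : (m₂:ℝ) * (((m₂:ℝ) + (ξ:ℝ)) * slicerLen 2 m₂) ≤ (ξ:ℝ) + 1 := by
      rw [len_eq]
      exact bound3 (m₂:ℝ) (ξ:ℝ) (Nat.cast_nonneg m₂) (Nat.cast_nonneg ξ)
    -- fourth term bounds
    have hT4a : (0:ℝ) ≤ ((m₂ + ξ : ℕ):ℝ) * slicerLen 2 (m₂+ξ) :=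
      mul_nonneg (Nat.cast_nonneg _) (len_pos _).le
    have hT4b : (m₂:ℝ) * (((m₂ + ξ : ℕ):ℝ) * slicerLen 2 (m₂+ξ)) ≤ 1 := by
      rw [len_eq]
      have hcast : ((m₂ + ξ : ℕ):ℝ) = (m₂:ℝ) + (ξ:ℝ) := by push_cast; ring
      rw [hcast]
      exact bound4 (m₂:ℝ) (ξ:ℝ) (Nat.cast_nonneg m₂) (Nat.cast_nonneg ξ)
    have hm₂0 : (0:ℝ) ≤ (m₂:ℝ) := Nat.cast_nonneg m₂
    have hT3low : 0 ≤ 2*(m₁:ℝ)*(m₂:ℝ) * ∑ k ∈ Finset.Icc (m₂+1) (m₂+ξ), (k:ℝ) * slicerDelta 2 k := by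
      apply mul_nonneg (by positivity) hT3a
    have hT3up : 2*(m₁:ℝ)*(m₂:ℝ) * ∑ k ∈ Finset.Icc (m₂+1) (m₂+ξ), (k:ℝ) * slicerDelta 2 k
        ≤ 2*(m₁:ℝ)*((ξ:ℝ)+1) := by
      calc 2*(m₁:ℝ)*(m₂:ℝ) * ∑ k ∈ Finset.Icc (m₂+1) (m₂+ξ), (k:ℝ) * slicerDelta 2 k
          ≤ 2*(m₁:ℝ)*(m₂:ℝ) * (((m₂:ℝ) + (ξ:ℝ)) * slicerLen 2 m₂) := by
            apply mul_le_mul_of_nonneg_left hT3b (by positivity)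
        _ = 2*(m₁:ℝ) * ((m₂:ℝ) * (((m₂:ℝ) + (ξ:ℝ)) * slicerLen 2 m₂)) := by ring
        _ ≤ 2*(m₁:ℝ)*((ξ:ℝ)+1) := mul_le_mul_of_nonneg_left hT3c hm₁0
    have hT4low : 0 ≤ 2*(m₁:ℝ)*(m₂:ℝ)*((m₂ + ξ : ℕ):ℝ) * slicerLen 2 (m₂+ξ) := by
      have := len_pos (m₂+ξ)
      positivity
    have hT4up : 2*(m₁:ℝ)*(m₂:ℝ)*((m₂ + ξ : ℕ):ℝ) * slicerLen 2 (m₂+ξ) ≤ 2*(m₁:ℝ) := by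
      calc 2*(m₁:ℝ)*(m₂:ℝ)*((m₂ + ξ : ℕ):ℝ) * slicerLen 2 (m₂+ξ)
          = 2*(m₁:ℝ) * ((m₂:ℝ) * (((m₂ + ξ : ℕ):ℝ) * slicerLen 2 (m₂+ξ))) := by ring
        _ ≤ 2*(m₁:ℝ) * 1 := mul_le_mul_of_nonneg_left hT4b hm₁0
        _ = 2*(m₁:ℝ) := by ring
    rw [slicerPhi]
    constructor
    · rw [hA₁]; linarith
    · rw [hA₂]; linarith
  -- limit machinery
  have hlogt : Tendsto (fun m₂ : ℕ => Real.log m₂) atTop atTop :=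
    Real.tendsto_log_atTop.comp tendsto_natCast_atTop_atTop
  have hinv : Tendsto (fun m₂ : ℕ => (Real.log m₂)⁻¹) atTop (𝓝 0) :=
    hlogt.inv_tendsto_atTop
  have hglim : Tendsto (fun m₂ : ℕ => 4*(m₁:ℝ) - A₁ * (Real.log m₂)⁻¹) atTop (𝓝 (4*(m₁:ℝ))) := by
    have := tendsto_const_nhds (x := (4*(m₁:ℝ))) (f := atTop (α := ℕ)) |>.sub (hinv.const_mul A₁)
    simpa using this
  have hhlim : Tendsto (fun m₂ : ℕ => 4*(m₁:ℝ) + A₂ * (Real.log m₂)⁻¹) atTop (𝓝 (4*(m₁:ℝ))) := by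
    have := tendsto_const_nhds (x := (4*(m₁:ℝ))) (f := atTop (α := ℕ)) |>.add (hinv.const_mul A₂)
    simpa using this
  have hev : ∀ᶠ m₂ : ℕ in atTop, 2 ≤ m₂ ∧ m₁ ≤ m₂ :=
    (eventually_ge_atTop 2).and (eventually_ge_atTop m₁)
  apply tendsto_of_tendsto_of_tendsto_of_le_of_le' hglim hhlim
  · filter_upwards [hev] with m₂ hm₂
    have hlogpos : 0 < Real.log m₂ :=
      Real.log_pos (by exact_mod_cast Nat.lt_of_lt_of_le Nat.one_lt_two hm₂.1)
    have hb := (hphi m₂ hm₂.2).1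
    have e : (4*(m₁:ℝ)*Real.log m₂ - A₁) / Real.log m₂ = 4*(m₁:ℝ) - A₁ * (Real.log m₂)⁻¹ := by
      rw [sub_div, mul_div_assoc, div_self hlogpos.ne', mul_one, div_eq_mul_inv]
    rw [← e]
    exact div_le_div_of_nonneg_right hb hlogpos.le
  · filter_upwards [hev] with m₂ hm₂
    have hlogpos : 0 < Real.log m₂ :=
      Real.log_pos (by exact_mod_cast Nat.lt_of_lt_of_le Nat.one_lt_two hm₂.1)
    have hb := (hphi m₂ hm₂.2).2
    have e : (4*(m₁:ℝ)*Real.log m₂ + A₂) / Real.log m₂ = 4*(m₁:ℝ) + A₂ * (Real.log m₂)⁻¹ := by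
      rw [add_div, mul_div_assoc, div_self hlogpos.ne', mul_one, div_eq_mul_inv]
    rw [← e]
    exact div_le_div_of_nonneg_right hb hlogpos.le
end

section
/- Let 0 < α < 3 and fix natural numbers τ ≥ 0 and ξ ≥ 0. Then the 3-point position autocorrelation function of the slicer map with constant time lags satisfies φ_α(m₁, m₁ + τ, m₁ + τ + ξ) / m₁^{3-α} → 6/(3-α) as m₁ → ∞. -/
open Filter Topology

section SlicerAux

open Finset Asymptotics

private lemma slicer_tele (l w : ℕ → ℝ) (a b : ℕ) (hab : a ≤ b) :
    ∑ k ∈ Finset.Icc (a+1) b, w k * (l (k-1) - l k)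
      = ∑ j ∈ Finset.Ico a b, (w (j+1) - w j) * l j + w a * l a - w b * l b := by
  induction b, hab using Nat.le_induction with
  | base => simp
  | succ b hab ih =>
      rw [Finset.sum_Icc_succ_top (by omega), Finset.sum_Ico_succ_top (by omega), ih]
      simp only [Nat.add_sub_cancel]
      ring

private lemma slicer_phi_eq (α : ℝ) (m τ ξ : ℕ) :
    slicerPhi α m (m+τ) (m+τ+ξ) =
      2 * ∑ j ∈ range m, (3*(j:ℝ)^2 + 3*j + 1) * slicerLen α j
      + 2*(m:ℝ) * ∑ j ∈ Ico m (m+τ), (2*(j:ℝ) + 1) * slicerLen α j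
      + 2*(m:ℝ)*((m:ℝ)+(τ:ℝ)) * ∑ j ∈ Ico (m+τ) (m+τ+ξ), slicerLen α j := by
  have t1 := slicer_tele (slicerLen α) (fun k => (k:ℝ)^3) 0 m (Nat.zero_le m)
  have t2 := slicer_tele (slicerLen α) (fun k => (k:ℝ)^2) m (m+τ) (by omega)
  have t3 := slicer_tele (slicerLen α) (fun k => (k:ℝ)) (m+τ) (m+τ+ξ) (by omega)
  simp only [slicerPhi, slicerDelta]
  rw [show (0:ℕ)+1 = 1 from rfl] at t1
  rw [t1, t2, t3, Finset.range_eq_Ico]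
  push_cast
  rw [Finset.sum_congr rfl (fun j _ => by push_cast; ring :
        ∀ j ∈ Finset.Ico 0 m, (((j:ℝ)+1)^3 - (j:ℝ)^3) * slicerLen α j
          = (3*(j:ℝ)^2 + 3*j + 1) * slicerLen α j),
     Finset.sum_congr rfl (fun j _ => by push_cast; ring :
        ∀ j ∈ Finset.Ico m (m+τ), (((j:ℝ)+1)^2 - (j:ℝ)^2) * slicerLen α j
          = (2*(j:ℝ) + 1) * slicerLen α j)]
  simp only [add_sub_cancel_left, one_mul]
  ring

private lemma slicer_keyK (α d : ℝ) (hd : 0 < d) :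
    Tendsto (fun m : ℕ => ((m:ℝ)+d)^(-α) * (m:ℝ)^α) atTop (𝓝 1) := by
  have h1 : Tendsto (fun m : ℕ => (m:ℝ)/((m:ℝ)+d)) atTop (𝓝 1) := by
    have h0 : Tendsto (fun m : ℕ => d/((m:ℝ)+d)) atTop (𝓝 0) :=
      tendsto_const_nhds.div_atTop
        (tendsto_atTop_add_const_right _ d tendsto_natCast_atTop_atTop)
    have := (tendsto_const_nhds (α := ℕ) (x := (1:ℝ))).sub h0
    rw [sub_zero] at this
    refine this.congr fun m => ?_
    have hmd : (m:ℝ) + d ≠ 0 := by positivity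
    field_simp
    ring
  have h2 : Tendsto (fun m : ℕ => ((m:ℝ)/((m:ℝ)+d))^α) atTop (𝓝 1) := by
    have hc : ContinuousAt (fun x : ℝ => x ^ α) 1 :=
      Real.continuousAt_rpow_const 1 α (Or.inl one_ne_zero)
    have := hc.tendsto.comp h1
    rwa [Real.one_rpow] at this
  refine h2.congr fun m => ?_
  have hm : (0:ℝ) ≤ (m:ℝ) := Nat.cast_nonneg m
  have hmd : (0:ℝ) ≤ (m:ℝ) + d := by positivity
  rw [Real.div_rpow hm hmd, Real.rpow_neg hmd, div_eq_mul_inv, mul_comm]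

private lemma slicer_keyPoly (a b : ℝ) :
    Tendsto (fun m : ℕ => (a*(m:ℝ)^2 + b*(m:ℝ)) / (m:ℝ)^3) atTop (𝓝 0) := by
  have h1 : Tendsto (fun m : ℕ => (1:ℝ)/(m:ℝ)) atTop (𝓝 0) :=
    tendsto_one_div_atTop_nhds_zero_nat
  have := (h1.const_mul a).add ((h1.mul h1).const_mul b)
  rw [mul_zero, zero_mul, mul_zero, add_zero] at this
  apply this.congr'
  filter_upwards [eventually_ge_atTop 1] with m hm
  have hm0 : (m:ℝ) ≠ 0 := by positivity
  field_simp

private lemma slicer_keyT (α : ℝ) (d : ℝ) (hd : 0 < d) (a b : ℝ) :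
    Tendsto (fun m : ℕ => ((a*(m:ℝ)^2 + b*(m:ℝ)) * ((m:ℝ)+d)^(-α)) / (m:ℝ)^(3-α))
      atTop (𝓝 0) := by
  have := (slicer_keyPoly a b).mul (slicer_keyK α d hd)
  rw [zero_mul] at this
  apply this.congr'
  filter_upwards [eventually_ge_atTop 1] with m hm
  have hm0 : (0:ℝ) < (m:ℝ) := by exact_mod_cast hm
  have hp3 : (m:ℝ)^(3-α) = (m:ℝ)^3 * ((m:ℝ)^α)⁻¹ := by
    rw [show (3:ℝ) - α = ((3:ℕ):ℝ) - α by norm_num, Real.rpow_sub hm0, div_eq_mul_inv,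
      Real.rpow_natCast]
  rw [hp3]
  have h1 : ((m:ℝ)^α) ≠ 0 := ne_of_gt (Real.rpow_pos_of_pos hm0 α)
  have h2 : ((m:ℝ)^3) ≠ 0 := by positivity
  field_simp

private lemma slicer_main_ratio (α : ℝ) (hα : 0 < α) (hα3 : α < 3) :
    Tendsto (fun n : ℕ =>
        (∑ j ∈ range n, (3*(j:ℝ)^2 + 3*(j:ℝ) + 1) * slicerLen α j) / (n:ℝ)^(3-α))
      atTop (𝓝 (3/(3-α))) := by
  set p : ℝ := 3 - α with hpdef
  have hp : 0 < p := by simp [hpdef]; linarith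
  set c : ℝ := (2:ℝ)^(1/α) with hcdef
  have hc : 0 < c := Real.rpow_pos_of_pos two_pos _
  set u : ℕ → ℝ := fun j => (3*(j:ℝ)^2 + 3*(j:ℝ) + 1) * slicerLen α j with hu
  set v : ℕ → ℝ := fun j => ((j:ℝ)+1)^p - (j:ℝ)^p with hv
  have hv0 : ∀ j, 0 < v j := fun j =>
    sub_pos.mpr (Real.rpow_lt_rpow (Nat.cast_nonneg j) (by linarith) hp)
  have hsum : ∀ n, ∑ j ∈ range n, v j = (n:ℝ)^p := by
    intro n
    have := Finset.sum_range_sub (f := fun j : ℕ => (j:ℝ)^p) n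
    simp only [Nat.cast_zero, Real.zero_rpow hp.ne', sub_zero] at this
    rw [← this]
    exact Finset.sum_congr rfl fun j _ => by push_cast; rfl
  have hslope : Tendsto (fun j : ℕ => ((1+1/(j:ℝ))^p - 1) * (j:ℝ)) atTop (𝓝 p) := by
    have hder : HasDerivAt (fun x : ℝ => (1+x)^p) p 0 := by
      have h1 : HasDerivAt (fun y : ℝ => y^p) (p * (1:ℝ)^(p-1)) ((1:ℝ)+0) := by
        rw [add_zero]
        exact Real.hasDerivAt_rpow_const (Or.inl one_ne_zero)
      have h2 : HasDerivAt (fun x : ℝ => 1+x) 1 0 :=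
        HasDerivAt.const_add 1 (hasDerivAt_id (0:ℝ))
      have := h1.comp 0 h2
      simpa [Function.comp_def, Real.one_rpow] using this
    have hsl := hasDerivAt_iff_tendsto_slope.mp hder
    have hg : Tendsto (fun j : ℕ => 1/(j:ℝ)) atTop (𝓝[≠] 0) := by
      rw [tendsto_nhdsWithin_iff]
      refine ⟨tendsto_one_div_atTop_nhds_zero_nat, ?_⟩
      filter_upwards [eventually_ge_atTop 1] with j hj
      have : (0:ℝ) < (j:ℝ) := by exact_mod_cast hj
      simp [Set.mem_compl_iff, this.ne']
    have := hsl.comp hg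
    apply this.congr'
    filter_upwards [eventually_ge_atTop 1] with j hj
    have hj0 : (0:ℝ) < (j:ℝ) := by exact_mod_cast hj
    simp only [Function.comp_apply, slope_def_field]
    field_simp
    simp
  have hratio : Tendsto (fun j : ℕ => u j / v j) atTop (𝓝 (3/p)) := by
    have hpoly : Tendsto (fun j : ℕ => (3*(j:ℝ)^2 + 3*(j:ℝ) + 1)/(j:ℝ)^2) atTop (𝓝 3) := by
      have h1 : Tendsto (fun j : ℕ => (1:ℝ)/(j:ℝ)) atTop (𝓝 0) :=
        tendsto_one_div_atTop_nhds_zero_nat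
      have := (tendsto_const_nhds (α := ℕ) (x := (3:ℝ))).add
        ((h1.const_mul 3).add (h1.mul h1))
      norm_num at this
      apply this.congr'
      filter_upwards [eventually_ge_atTop 1] with j hj
      have hj0 : (j:ℝ) ≠ 0 := by positivity
      field_simp
      ring
    have hK := slicer_keyK α c hc
    have hprod := (hpoly.mul hK).div hslope hp.ne'
    norm_num at hprod
    apply hprod.congr'
    filter_upwards [eventually_ge_atTop 1] with j hj
    have hj0 : (0:ℝ) < (j:ℝ) := by exact_mod_cast hj
    have hjc : (0:ℝ) < (j:ℝ) + c := by positivity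
    have hsl : slicerLen α j = ((j:ℝ)+c)^(-α) := rfl
    have hvj : v j = (j:ℝ)^p * ((1+1/(j:ℝ))^p - 1) := by
      have h1 : ((j:ℝ)+1)^p = (j:ℝ)^p * (1+1/(j:ℝ))^p := by
        rw [← Real.mul_rpow hj0.le (by positivity)]
        congr 1
        field_simp
      simp only [hv]
      rw [h1]; ring
    have hjp : (j:ℝ)^p = (j:ℝ)^3 * ((j:ℝ)^α)⁻¹ := by
      rw [hpdef, show (3:ℝ) - α = ((3:ℕ):ℝ) - α by norm_num, Real.rpow_sub hj0,
        div_eq_mul_inv, Real.rpow_natCast]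
    have hα0 : ((j:ℝ)^α) ≠ 0 := ne_of_gt (Real.rpow_pos_of_pos hj0 α)
    have hs0 : ((1+1/(j:ℝ))^p - 1) ≠ 0 := by
      have h3 : (1:ℝ) < 1 + 1/(j:ℝ) := by
        have : (0:ℝ) < 1/(j:ℝ) := by positivity
        linarith
      have h2 : (1:ℝ)^p < (1+1/(j:ℝ))^p := Real.rpow_lt_rpow (by norm_num) h3 hp
      rw [Real.one_rpow] at h2
      linarith
    rw [hu]
    simp only [Pi.div_apply]
    rw [hsl, hvj, hjp]
    have hs1 : ((1+(↑j:ℝ)⁻¹)^p - 1) = ((1+1/(↑j:ℝ))^p - 1) := by rw [one_div]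
    rw [hs1]
    field_simp
  set L : ℝ := 3/p with hL
  have hw : Tendsto (fun j : ℕ => (u j - L * v j) / v j) atTop (𝓝 0) := by
    have := hratio.sub (tendsto_const_nhds (α := ℕ) (x := L))
    rw [sub_self] at this
    apply this.congr fun j => ?_
    have := (hv0 j).ne'
    field_simp
  have hlo : (fun j => u j - L * v j) =o[atTop] v :=
    (isLittleO_iff_tendsto fun j h => absurd h (hv0 j).ne').mpr hw
  have htop : Tendsto (fun n : ℕ => ∑ j ∈ range n, v j) atTop atTop := by
    have : Tendsto (fun n : ℕ => (n:ℝ)^p) atTop atTop :=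
      (tendsto_rpow_atTop hp).comp tendsto_natCast_atTop_atTop
    exact Filter.Tendsto.congr (fun n => (hsum n).symm) this
  have hsumlo := hlo.sum_range (fun j => (hv0 j).le) htop
  have hfin : Tendsto (fun n : ℕ =>
      (∑ j ∈ range n, (u j - L * v j)) / (∑ j ∈ range n, v j)) atTop (𝓝 0) :=
    hsumlo.tendsto_div_nhds_zero
  have := hfin.add (tendsto_const_nhds (α := ℕ) (x := L))
  rw [zero_add] at this
  apply this.congr'
  filter_upwards [eventually_ge_atTop 1] with n hn
  have hn0 : (0:ℝ) < (n:ℝ) := by exact_mod_cast hn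
  have hnp : ((n:ℝ)^p) ≠ 0 := ne_of_gt (Real.rpow_pos_of_pos hn0 p)
  rw [Finset.sum_sub_distrib, ← Finset.mul_sum, hsum]
  field_simp
  ring

end SlicerAux

theorem slicer_phi_const_lags (α : ℝ) (hα : 0 < α) (hα3 : α < 3) (τ ξ : ℕ) :
    Tendsto (fun m₁ : ℕ => slicerPhi α m₁ (m₁ + τ) (m₁ + τ + ξ) / (m₁ : ℝ) ^ (3 - α)) atTop
      (𝓝 (6 / (3 - α))) := by
  classical
  set c : ℝ := (2:ℝ)^(1/α) with hcdef
  have hc : 0 < c := Real.rpow_pos_of_pos two_pos _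
  -- limit of the main part
  have hA : Tendsto (fun m : ℕ =>
      2 * ((∑ j ∈ Finset.range m, (3*(j:ℝ)^2 + 3*(j:ℝ) + 1) * slicerLen α j)
        / (m:ℝ)^(3-α))) atTop (𝓝 (2 * (3/(3-α)))) :=
    (slicer_main_ratio α hα hα3).const_mul 2
  -- middle part
  have hB : Tendsto (fun m : ℕ => ∑ i ∈ Finset.range τ,
      2*(m:ℝ)*((2*((m+i:ℕ):ℝ)+1) * slicerLen α (m+i)) / (m:ℝ)^(3-α)) atTop (𝓝 0) := by
    have hterm : ∀ i : ℕ, Tendsto (fun m : ℕ =>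
        2*(m:ℝ)*((2*((m+i:ℕ):ℝ)+1) * slicerLen α (m+i)) / (m:ℝ)^(3-α)) atTop (𝓝 0) := by
      intro i
      have hd : (0:ℝ) < (i:ℝ) + c := by positivity
      have := slicer_keyT α ((i:ℝ)+c) hd 4 (4*(i:ℝ)+2)
      apply this.congr fun m => ?_
      have hb : (m:ℝ) + ((i:ℝ)+c) = ((m+i:ℕ):ℝ) + c := by push_cast; ring
      rw [hb]
      show ((4*(m:ℝ)^2 + (4*(i:ℝ)+2)*(m:ℝ)) * (((m+i:ℕ):ℝ) + c)^(-α)) / (m:ℝ)^(3-α) = _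
      rw [show slicerLen α (m+i) = (((m+i:ℕ):ℝ) + c)^(-α) from rfl]
      push_cast
      ring
    have := tendsto_finset_sum (Finset.range τ) (fun i _ => hterm i)
    simpa using this
  -- tail part
  have hC : Tendsto (fun m : ℕ => ∑ i ∈ Finset.range ξ,
      2*(m:ℝ)*((m:ℝ)+(τ:ℝ)) * slicerLen α (m+τ+i) / (m:ℝ)^(3-α)) atTop (𝓝 0) := by
    have hterm : ∀ i : ℕ, Tendsto (fun m : ℕ =>
        2*(m:ℝ)*((m:ℝ)+(τ:ℝ)) * slicerLen α (m+τ+i) / (m:ℝ)^(3-α)) atTop (𝓝 0) := by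
      intro i
      have hd : (0:ℝ) < (τ:ℝ) + (i:ℝ) + c := by positivity
      have := slicer_keyT α ((τ:ℝ)+(i:ℝ)+c) hd 2 (2*(τ:ℝ))
      apply this.congr fun m => ?_
      have hb : (m:ℝ) + ((τ:ℝ)+(i:ℝ)+c) = ((m+τ+i:ℕ):ℝ) + c := by push_cast; ring
      rw [hb]
      show ((2*(m:ℝ)^2 + (2*(τ:ℝ))*(m:ℝ)) * (((m+τ+i:ℕ):ℝ) + c)^(-α)) / (m:ℝ)^(3-α) = _
      rw [show slicerLen α (m+τ+i) = (((m+τ+i:ℕ):ℝ) + c)^(-α) from rfl]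
      push_cast
      ring
    have := tendsto_finset_sum (Finset.range ξ) (fun i _ => hterm i)
    simpa using this
  have htot := (hA.add hB).add hC
  rw [add_zero, add_zero] at htot
  have hval : 2 * (3/(3-α)) = 6/(3-α) := by ring
  rw [hval] at htot
  apply htot.congr fun m => ?_
  rw [slicer_phi_eq α m τ ξ]
  rw [add_div, add_div]
  congr 1
  · congr 1
    · rw [mul_div_assoc]
    · rw [Finset.sum_Ico_eq_sum_range]
      simp only [Nat.add_sub_cancel_left]
      rw [Finset.mul_sum, Finset.sum_div]
  · rw [Finset.sum_Ico_eq_sum_range]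
    simp only [show ∀ m : ℕ, m + τ + ξ - (m + τ) = ξ from fun m => by omega]
    rw [Finset.mul_sum, Finset.sum_div]
end

section
/- Let α = 3 and fix natural numbers τ ≥ 0 and ξ ≥ 0. Then the 3-point position autocorrelation function of the slicer map with constant time lags satisfies φ_α(m₁, m₁ + τ, m₁ + τ + ξ) / log m₁ → 6 as m₁ → ∞, where log denotes the natural logarithm. -/
open Filter Topology

noncomputable def cc : ℝ := (2:ℝ) ^ ((1:ℝ)/3)

lemma cc_ge_one : 1 ≤ cc := by
  have := Real.rpow_le_rpow_of_exponent_le (x := 2) (by norm_num) (show (0:ℝ) ≤ 1/3 by norm_num)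
  simpa [cc] using this

lemma cc_le_two : cc ≤ 2 := by
  have := Real.rpow_le_rpow_of_exponent_le (x := 2) (by norm_num) (show (1:ℝ)/3 ≤ 1 by norm_num)
  simpa [cc] using this

lemma cc_pos : 0 < cc := lt_of_lt_of_le one_pos cc_ge_one

noncomputable def F (M : ℕ) : ℝ := (((M:ℝ) + cc)^3)⁻¹

lemma len_eq (M : ℕ) : slicerLen 3 M = F M := by
  have h1 : (2:ℝ) ^ (1/(3:ℝ)) = cc := rfl
  have h0 : (0:ℝ) ≤ (M:ℝ) + (2:ℝ) ^ (1/(3:ℝ)) := by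
    have := cc_pos; rw [h1]; positivity
  rw [slicerLen, F, Real.rpow_neg h0, h1,
    show (3:ℝ) = ((3:ℕ):ℝ) by norm_num, Real.rpow_natCast]

lemma delta_eq (k : ℕ) : slicerDelta 3 k = F (k-1) - F k := by
  rw [slicerDelta, len_eq, len_eq]

lemma ratio_tendsto (a b : ℝ) :
    Tendsto (fun m : ℕ => ((m:ℝ)+a)/((m:ℝ)+b)) atTop (𝓝 1) := by
  have h1 : Tendsto (fun m : ℕ => ((m:ℝ)+b)) atTop atTop :=
    tendsto_atTop_add_const_right _ b tendsto_natCast_atTop_atTop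
  have h2 : Tendsto (fun m : ℕ => (a-b)/((m:ℝ)+b)) atTop (𝓝 0) :=
    Tendsto.div_atTop tendsto_const_nhds h1
  have h3 := h2.const_add 1
  rw [add_zero] at h3
  apply h3.congr'
  filter_upwards [h1.eventually_gt_atTop 0] with m hm
  field_simp
  ring

lemma cube_tendsto (a1 a2 a3 b : ℝ) (hb : 0 < b) :
    Tendsto (fun m : ℕ => ((m:ℝ)+a1)*((m:ℝ)+a2)*((m:ℝ)+a3) * ((((m:ℝ)+b))^3)⁻¹)
      atTop (𝓝 1) := by
  have h := ((ratio_tendsto a1 b).mul (ratio_tendsto a2 b)).mul (ratio_tendsto a3 b)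
  rw [show (1:ℝ)*1*1 = 1 by norm_num] at h
  apply h.congr
  intro m
  rw [div_eq_mul_inv, div_eq_mul_inv, div_eq_mul_inv, ← inv_pow]
  ring

lemma telescope (g q : ℕ → ℝ) (m : ℕ) :
    ∑ k ∈ Finset.Icc 1 m, q k * (g (k-1) - g k)
      = (∑ k ∈ Finset.Icc 1 m, (q k - q (k-1)) * g (k-1)) - q m * g m + q 0 * g 0 := by
  induction m with
  | zero => simp
  | succ n ih =>
    rw [Finset.sum_Icc_succ_top (Nat.one_le_iff_ne_zero.mpr (Nat.succ_ne_zero n)),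
      Finset.sum_Icc_succ_top (Nat.one_le_iff_ne_zero.mpr (Nat.succ_ne_zero n)), ih]
    simp only [Nat.add_sub_cancel]
    ring

noncomputable def w (i : ℕ) : ℝ :=
  2*(((i:ℝ)+1)^3 - (i:ℝ)^3) * (((i:ℝ)+cc)^3)⁻¹ - 6/((i:ℝ)+1)

lemma w_bound (i : ℕ) : |w i| ≤ 50/((i:ℝ)+1)^2 := by
  set x : ℝ := (i:ℝ) with hxdef
  have hx : 0 ≤ x := Nat.cast_nonneg i
  set e : ℝ := cc - 1 with hedef
  have he0 : 0 ≤ e := by have := cc_ge_one; simp [hedef]; linarith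
  have he1 : e ≤ 1 := by have := cc_le_two; simp [hedef]; linarith
  have hcc : cc = 1 + e := by simp [hedef]
  have hx1 : (0:ℝ) < x + 1 := by linarith
  have hxc : (0:ℝ) < x + cc := by rw [hcc]; linarith
  have hD : (0:ℝ) < (x+cc)^3*(x+1) := by positivity
  have key : w i = (2*((x+1)^3 - x^3)*(x+1) - 6*(x+cc)^3) / ((x+cc)^3*(x+1)) := by
    rw [w, ← hxdef]
    field_simp
  have hNid : 2*((x+1)^3 - x^3)*(x+1) - 6*(x+cc)^3
      = -(6*x^2+10*x+4) - 18*(x+1)^2*e - 18*(x+1)*e^2 - 6*e^3 := by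
    rw [hcc]; ring
  have ha : 0 ≤ e*(x+1)^2 := by positivity
  have hb : 0 ≤ e^2*(x+1) := by positivity
  have hc : 0 ≤ e^3 := by positivity
  have hNle : 2*((x+1)^3 - x^3)*(x+1) - 6*(x+cc)^3 ≤ 0 := by nlinarith
  rw [key, abs_div, abs_of_pos hD, div_le_div_iff₀ hD (by positivity),
    abs_of_nonpos hNle]
  have ha' : (x+1)^2*e ≤ (x+1)^2 := by nlinarith
  have hb' : (x+1)*e^2 ≤ (x+1)^2 := by nlinarith
  have hc' : e^3 ≤ (x+1)^2 := by nlinarith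
  have h1 : -(2*((x+1)^3 - x^3)*(x+1) - 6*(x+cc)^3) ≤ 50*(x+1)^2 := by nlinarith
  have h2 : (x+1)^4 ≤ (x+cc)^3*(x+1) := by
    have h3 : (x+1)^3 ≤ (x+cc)^3 := by
      apply pow_le_pow_left₀ (le_of_lt hx1) (by rw [hcc]; linarith)
    calc (x+1)^4 = (x+1)^3*(x+1) := by ring
    _ ≤ (x+cc)^3*(x+1) := mul_le_mul_of_nonneg_right h3 (le_of_lt hx1)
  calc -(2*((x+1)^3 - x^3)*(x+1) - 6*(x+cc)^3) * (x+1)^2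
      ≤ 50*(x+1)^2 * (x+1)^2 := mul_le_mul_of_nonneg_right h1 (by positivity)
    _ = 50*(x+1)^4 := by ring
    _ ≤ 50*((x+cc)^3*(x+1)) := by nlinarith

lemma summable_w : Summable w := by
  rw [← summable_abs_iff]
  apply Summable.of_nonneg_of_le (fun i => abs_nonneg _) w_bound
  have h : Summable (fun n : ℕ => 1/((n:ℝ))^2) := by
    rw [Real.summable_one_div_nat_pow]; norm_num
  have h2 := (summable_nat_add_iff 1).mpr h
  have h3 := h2.mul_left 50
  apply h3.congr
  intro i
  push_cast
  ring

lemma icc_to_range (a b : ℕ) (f : ℕ → ℝ) :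
    ∑ k ∈ Finset.Icc (a+1) (a+b), f k = ∑ i ∈ Finset.range b, f (a+1+i) := by
  rw [← Finset.Ico_add_one_right_eq_Icc, Finset.sum_Ico_eq_sum_range,
    show a+b+1 - (a+1) = b by omega]

lemma icc_one_to_range (m : ℕ) (f : ℕ → ℝ) :
    ∑ k ∈ Finset.Icc 1 m, f k = ∑ i ∈ Finset.range m, f (1+i) := by
  have := icc_to_range 0 m f
  simpa using this

lemma harm_tendsto :
    Tendsto (fun m : ℕ => (∑ i ∈ Finset.range m, ((i:ℝ)+1)⁻¹) - Real.log m) atTop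
      (𝓝 Real.eulerMascheroniConstant) := by
  apply Real.tendsto_harmonic_sub_log.congr
  intro n
  congr 1
  rw [harmonic]
  push_cast
  rfl

lemma phi_decomp (τ ξ m : ℕ) :
    slicerPhi 3 m (m+τ) (m+τ+ξ) - 6*Real.log m =
      (∑ i ∈ Finset.range m, w i)
      + 6*((∑ i ∈ Finset.range m, ((i:ℝ)+1)⁻¹) - Real.log m)
      - 2*((m:ℝ)^3 * F m)
      + 2*(m:ℝ) * ∑ i ∈ Finset.range τ, (((m+1+i:ℕ)):ℝ)^2 * (F (m+i) - F (m+1+i))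
      + 2*(m:ℝ)*((m+τ:ℕ):ℝ) * ∑ i ∈ Finset.range ξ,
          (((m+τ+1+i:ℕ)):ℝ) * (F (m+τ+i) - F (m+τ+1+i))
      + 2*(m:ℝ)*((m+τ:ℕ):ℝ)*((m+τ+ξ:ℕ):ℝ) * F (m+τ+ξ) := by
  have e1 : ∑ k ∈ Finset.Icc 1 m, (k:ℝ)^3 * slicerDelta 3 k
      = (∑ i ∈ Finset.range m, ((((i:ℝ)+1)^3 - (i:ℝ)^3) * F i)) - (m:ℝ)^3 * F m := by
    simp only [delta_eq]
    have htel := telescope F (fun k => (k:ℝ)^3) m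
    rw [htel]
    norm_num
    rw [icc_one_to_range]
    congr 1
    funext i
    rw [show 1+i-1 = i by omega]
    push_cast
    ring
  have e2 : ∑ k ∈ Finset.Icc (m+1) (m+τ), (k:ℝ)^2 * slicerDelta 3 k
      = ∑ i ∈ Finset.range τ, (((m+1+i:ℕ)):ℝ)^2 * (F (m+i) - F (m+1+i)) := by
    simp only [delta_eq]
    rw [icc_to_range]
    apply Finset.sum_congr rfl
    intro i _
    rw [show m+1+i-1 = m+i by omega]
  have e3 : ∑ k ∈ Finset.Icc (m+τ+1) (m+τ+ξ), (k:ℝ) * slicerDelta 3 k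
      = ∑ i ∈ Finset.range ξ, (((m+τ+1+i:ℕ)):ℝ) * (F (m+τ+i) - F (m+τ+1+i)) := by
    simp only [delta_eq]
    rw [icc_to_range]
    apply Finset.sum_congr rfl
    intro i _
    rw [show m+τ+1+i-1 = m+τ+i by omega]
  have hC : 2 * ∑ i ∈ Finset.range m, ((((i:ℝ)+1)^3 - (i:ℝ)^3) * F i)
      = (∑ i ∈ Finset.range m, w i) + 6 * ∑ i ∈ Finset.range m, ((i:ℝ)+1)⁻¹ := by
    rw [Finset.mul_sum, Finset.mul_sum, ← Finset.sum_add_distrib]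
    apply Finset.sum_congr rfl
    intro i _
    simp only [w, F]
    rw [div_eq_mul_inv]
    ring
  rw [slicerPhi, e1, e2, e3, len_eq]
  linear_combination hC

lemma diff_tendsto (τ ξ : ℕ) :
    Tendsto (fun m : ℕ => slicerPhi 3 m (m+τ) (m+τ+ξ) - 6*Real.log m) atTop
      (𝓝 ((∑' i, w i) + 6*Real.eulerMascheroniConstant - 2*1 + 0 + 0 + 2*1)) := by
  have h1 : Tendsto (fun m : ℕ => ∑ i ∈ Finset.range m, w i) atTop (𝓝 (∑' i, w i)) :=
    summable_w.hasSum.tendsto_sum_nat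
  have h2 := harm_tendsto.const_mul (6:ℝ)
  have h3 : Tendsto (fun m : ℕ => 2*((m:ℝ)^3 * F m)) atTop (𝓝 (2*1)) := by
    have h := (cube_tendsto 0 0 0 cc cc_pos).const_mul (2:ℝ)
    apply h.congr
    intro m
    simp only [F]
    push_cast
    ring
  have h4 : Tendsto (fun m : ℕ =>
      2*(m:ℝ) * ∑ i ∈ Finset.range τ, (((m+1+i:ℕ)):ℝ)^2 * (F (m+i) - F (m+1+i)))
      atTop (𝓝 0) := by
    have hsum : Tendsto (fun m : ℕ =>
        ∑ i ∈ Finset.range τ, 2*(m:ℝ)*((((m+1+i:ℕ)):ℝ)^2 * (F (m+i) - F (m+1+i))))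
        atTop (𝓝 (∑ _i ∈ Finset.range τ, (0:ℝ))) := by
      apply tendsto_finset_sum
      intro i _
      have hb1 : (0:ℝ) < (i:ℝ) + cc := by have := cc_pos; positivity
      have hb2 : (0:ℝ) < (i:ℝ) + 1 + cc := by have := cc_pos; positivity
      have hA := (cube_tendsto 0 ((i:ℝ)+1) ((i:ℝ)+1) ((i:ℝ)+cc) hb1).const_mul (2:ℝ)
      have hB := (cube_tendsto 0 ((i:ℝ)+1) ((i:ℝ)+1) ((i:ℝ)+1+cc) hb2).const_mul (2:ℝ)
      have h := hA.sub hB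
      rw [show (2:ℝ)*1 - 2*1 = 0 by norm_num] at h
      apply h.congr
      intro m
      simp only [F]
      push_cast
      ring
    simp only [Finset.sum_const, smul_zero] at hsum
    apply hsum.congr
    intro m
    rw [Finset.mul_sum]
  have h5 : Tendsto (fun m : ℕ =>
      2*(m:ℝ)*((m+τ:ℕ):ℝ) * ∑ i ∈ Finset.range ξ,
        (((m+τ+1+i:ℕ)):ℝ) * (F (m+τ+i) - F (m+τ+1+i)))
      atTop (𝓝 0) := by
    have hsum : Tendsto (fun m : ℕ =>
        ∑ i ∈ Finset.range ξ, 2*(m:ℝ)*((m+τ:ℕ):ℝ)*((((m+τ+1+i:ℕ)):ℝ) * (F (m+τ+i) - F (m+τ+1+i))))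
        atTop (𝓝 (∑ _i ∈ Finset.range ξ, (0:ℝ))) := by
      apply tendsto_finset_sum
      intro i _
      have hb1 : (0:ℝ) < (τ:ℝ) + (i:ℝ) + cc := by have := cc_pos; positivity
      have hb2 : (0:ℝ) < (τ:ℝ) + (i:ℝ) + 1 + cc := by have := cc_pos; positivity
      have hA := (cube_tendsto 0 (τ:ℝ) ((τ:ℝ)+(i:ℝ)+1) ((τ:ℝ)+(i:ℝ)+cc) hb1).const_mul (2:ℝ)
      have hB := (cube_tendsto 0 (τ:ℝ) ((τ:ℝ)+(i:ℝ)+1) ((τ:ℝ)+(i:ℝ)+1+cc) hb2).const_mul (2:ℝ)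
      have h := hA.sub hB
      rw [show (2:ℝ)*1 - 2*1 = 0 by norm_num] at h
      apply h.congr
      intro m
      simp only [F]
      push_cast
      ring
    simp only [Finset.sum_const, smul_zero] at hsum
    apply hsum.congr
    intro m
    rw [Finset.mul_sum]
  have h6 : Tendsto (fun m : ℕ =>
      2*(m:ℝ)*((m+τ:ℕ):ℝ)*((m+τ+ξ:ℕ):ℝ) * F (m+τ+ξ)) atTop (𝓝 (2*1)) := by
    have hb : (0:ℝ) < (τ:ℝ) + (ξ:ℝ) + cc := by have := cc_pos; positivity
    have h := (cube_tendsto 0 (τ:ℝ) ((τ:ℝ)+(ξ:ℝ)) ((τ:ℝ)+(ξ:ℝ)+cc) hb).const_mul (2:ℝ)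
    apply h.congr
    intro m
    simp only [F]
    push_cast
    ring
  have H := ((((h1.add h2).sub h3).add h4).add h5).add h6
  apply H.congr
  intro m
  exact (phi_decomp τ ξ m).symm

theorem slicer_phi_const_lags_log (α : ℝ) (hα : α = 3) (τ ξ : ℕ) :
    Tendsto (fun m₁ : ℕ => slicerPhi α m₁ (m₁ + τ) (m₁ + τ + ξ) / Real.log m₁) atTop
      (𝓝 6) := by
  subst hα
  have hdiff := diff_tendsto τ ξ
  have hlog : Tendsto (fun m : ℕ => Real.log m) atTop atTop :=
    Real.tendsto_log_atTop.comp tendsto_natCast_atTop_atTop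
  have hinv : Tendsto (fun m : ℕ => (Real.log m)⁻¹) atTop (𝓝 0) :=
    hlog.inv_tendsto_atTop
  have h0 := hdiff.mul hinv
  rw [mul_zero] at h0
  have h6 := h0.add (tendsto_const_nhds (x := (6:ℝ)))
  rw [zero_add] at h6
  apply h6.congr'
  filter_upwards [hlog.eventually_gt_atTop 0] with m hm
  have hne : Real.log m ≠ 0 := ne_of_gt hm
  field_simp
  ring
end

section
/- Let α > 3 and fix natural numbers τ ≥ 0 and ξ ≥ 0. Then the 3-point position autocorrelation function of the slicer map with constant time lags converges: there exists a finite real number C such that φ_α(m₁, m₁ + τ, m₁ + τ + ξ) → C as m₁ → ∞. -/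
open Filter Topology

lemma one_le_slicer_c {α : ℝ} (hα : 0 < α) : (1 : ℝ) ≤ (2 : ℝ) ^ (1 / α) := by
  have := Real.rpow_le_rpow_of_exponent_le (x := 2) one_le_two
    (le_of_lt (by positivity : (0:ℝ) < 1 / α))
  simpa using this

lemma slicerLen_nonneg {α : ℝ} (hα : 0 < α) (M : ℕ) : 0 ≤ slicerLen α M := by
  have h1 := one_le_slicer_c hα
  have : (0:ℝ) < (M : ℝ) + (2 : ℝ) ^ (1 / α) := by positivity
  exact le_of_lt (Real.rpow_pos_of_pos this _)

/-- Key decay lemma: cubic polynomial times slicer length tends to zero. -/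
lemma slicer_key {α : ℝ} (hα : 3 < α) (a b c : ℝ) (ha : 0 ≤ a) (hb : 0 ≤ b) (hc : 0 ≤ c)
    (d : ℕ) :
    Tendsto (fun m : ℕ => ((m:ℝ) + a) * ((m:ℝ) + b) * ((m:ℝ) + c) * slicerLen α (m + d))
      atTop (𝓝 0) := by
  have hα0 : 0 < α := by linarith
  have h1 : (1 : ℝ) ≤ (2 : ℝ) ^ (1 / α) := one_le_slicer_c hα0
  have hlim : Tendsto (fun m : ℕ => (a+1)*(b+1)*(c+1) * ((m:ℝ) + 1) ^ (-(α-3)))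
      atTop (𝓝 ((a+1)*(b+1)*(c+1) * 0)) := by
    apply Tendsto.const_mul
    exact (tendsto_rpow_neg_atTop (by linarith : 0 < α - 3)).comp
      (tendsto_atTop_add_const_right atTop 1 tendsto_natCast_atTop_atTop)
  rw [mul_zero] at hlim
  apply squeeze_zero (fun m => ?_) (fun m => ?_) hlim
  · have := slicerLen_nonneg hα0 (m + d)
    have hm : (0:ℝ) ≤ (m:ℝ) := Nat.cast_nonneg m
    positivity
  · have hm : (0:ℝ) ≤ (m:ℝ) := Nat.cast_nonneg m
    have hbase : (0:ℝ) < (m:ℝ) + 1 := by linarith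
    have hL : slicerLen α (m + d) ≤ ((m:ℝ) + 1) ^ (-α) := by
      apply Real.rpow_le_rpow_of_nonpos hbase _ (by linarith)
      have : ((m:ℕ):ℝ) ≤ ((m + d : ℕ):ℝ) := by exact_mod_cast Nat.le_add_right m d
      push_cast at this ⊢
      linarith
    have hP : ((m:ℝ) + a) * ((m:ℝ) + b) * ((m:ℝ) + c)
        ≤ (a+1)*(b+1)*(c+1) * ((m:ℝ) + 1) ^ (3:ℕ) := by
      have hA : (m:ℝ) + a ≤ (a+1)*((m:ℝ)+1) := by nlinarith
      have hB : (m:ℝ) + b ≤ (b+1)*((m:ℝ)+1) := by nlinarith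
      have hC : (m:ℝ) + c ≤ (c+1)*((m:ℝ)+1) := by nlinarith
      have h1 : ((m:ℝ) + a) * ((m:ℝ) + b) ≤ ((a+1)*((m:ℝ)+1)) * ((b+1)*((m:ℝ)+1)) :=
        mul_le_mul hA hB (by linarith) (by positivity)
      have h2 : ((m:ℝ) + a) * ((m:ℝ) + b) * ((m:ℝ) + c)
          ≤ ((a+1)*((m:ℝ)+1)) * ((b+1)*((m:ℝ)+1)) * ((c+1)*((m:ℝ)+1)) :=
        mul_le_mul h1 hC (by linarith) (by positivity)
      calc ((m:ℝ) + a) * ((m:ℝ) + b) * ((m:ℝ) + c)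
          ≤ ((a+1)*((m:ℝ)+1)) * ((b+1)*((m:ℝ)+1)) * ((c+1)*((m:ℝ)+1)) := h2
        _ = (a+1)*(b+1)*(c+1) * ((m:ℝ) + 1) ^ (3:ℕ) := by ring
    have hLnn : (0:ℝ) ≤ ((m:ℝ) + 1) ^ (-α) := le_of_lt (Real.rpow_pos_of_pos hbase _)
    have hPnn : (0:ℝ) ≤ ((m:ℝ) + a) * ((m:ℝ) + b) * ((m:ℝ) + c) := by positivity
    calc ((m:ℝ) + a) * ((m:ℝ) + b) * ((m:ℝ) + c) * slicerLen α (m + d)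
        ≤ ((m:ℝ) + a) * ((m:ℝ) + b) * ((m:ℝ) + c) * (((m:ℝ) + 1) ^ (-α)) :=
          mul_le_mul_of_nonneg_left hL hPnn
      _ ≤ ((a+1)*(b+1)*(c+1) * ((m:ℝ) + 1) ^ (3:ℕ)) * (((m:ℝ) + 1) ^ (-α)) :=
          mul_le_mul_of_nonneg_right hP hLnn
      _ = (a+1)*(b+1)*(c+1) * (((m:ℝ) + 1) ^ ((3:ℕ):ℝ) * ((m:ℝ) + 1) ^ (-α)) := by
          rw [Real.rpow_natCast]; ring
      _ = (a+1)*(b+1)*(c+1) * ((m:ℝ) + 1) ^ (-(α-3)) := by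
          rw [← Real.rpow_add hbase]; push_cast; ring_nf

/-- Abel summation identity for the cubic sum. -/
lemma slicer_abel (α : ℝ) (m : ℕ) :
    ∑ k ∈ Finset.Icc 1 m, (k : ℝ) ^ 3 * slicerDelta α k
      = (∑ j ∈ Finset.range m, (((j:ℝ)+1) ^ 3 - (j:ℝ) ^ 3) * slicerLen α j)
        - (m : ℝ) ^ 3 * slicerLen α m := by
  induction m with
  | zero => simp
  | succ n ih =>
    rw [Finset.sum_Icc_succ_top (by omega : 1 ≤ n + 1), ih, Finset.sum_range_succ]
    have hδ : slicerDelta α (n + 1) = slicerLen α n - slicerLen α (n + 1) := by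
      simp [slicerDelta]
    rw [hδ]
    push_cast
    ring

lemma slicer_summable {α : ℝ} (hα : 3 < α) :
    Summable (fun j : ℕ => (((j:ℝ)+1) ^ 3 - (j:ℝ) ^ 3) * slicerLen α j) := by
  have hα0 : 0 < α := by linarith
  have h1 : (1 : ℝ) ≤ (2 : ℝ) ^ (1 / α) := one_le_slicer_c hα0
  have hmaj : Summable (fun j : ℕ => (7:ℝ) * ((j:ℝ)+1) ^ (2 - α)) := by
    apply Summable.mul_left
    have : Summable (fun j : ℕ => ((j:ℝ)) ^ (2 - α)) :=
      Real.summable_nat_rpow.2 (by linarith)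
    have := (summable_nat_add_iff 1).2 this
    convert this using 2 with j
    · rfl
    push_cast
    ring_nf
  apply Summable.of_nonneg_of_le (fun j => ?_) (fun j => ?_) hmaj
  · have hj : (0:ℝ) ≤ (j:ℝ) := Nat.cast_nonneg j
    have hnn := slicerLen_nonneg hα0 j
    exact mul_nonneg (by nlinarith) hnn
  · have hj : (0:ℝ) ≤ (j:ℝ) := Nat.cast_nonneg j
    have hbase : (0:ℝ) < (j:ℝ) + 1 := by linarith
    have hL : slicerLen α j ≤ ((j:ℝ) + 1) ^ (-α) := by
      apply Real.rpow_le_rpow_of_nonpos hbase _ (by linarith)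
      linarith
    have hLnn : (0:ℝ) ≤ ((j:ℝ) + 1) ^ (-α) := le_of_lt (Real.rpow_pos_of_pos hbase _)
    have hP : (((j:ℝ)+1) ^ 3 - (j:ℝ) ^ 3) ≤ 7 * ((j:ℝ)+1) ^ (2:ℕ) := by nlinarith
    have hPnn : (0:ℝ) ≤ (((j:ℝ)+1) ^ 3 - (j:ℝ) ^ 3) := by nlinarith
    calc (((j:ℝ)+1) ^ 3 - (j:ℝ) ^ 3) * slicerLen α j
        ≤ (((j:ℝ)+1) ^ 3 - (j:ℝ) ^ 3) * (((j:ℝ) + 1) ^ (-α)) :=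
          mul_le_mul_of_nonneg_left hL hPnn
      _ ≤ (7 * ((j:ℝ)+1) ^ (2:ℕ)) * (((j:ℝ) + 1) ^ (-α)) :=
          mul_le_mul_of_nonneg_right hP hLnn
      _ = 7 * (((j:ℝ)+1) ^ ((2:ℕ):ℝ) * ((j:ℝ) + 1) ^ (-α)) := by
          rw [Real.rpow_natCast]; ring
      _ = 7 * ((j:ℝ)+1) ^ (2 - α) := by
          rw [← Real.rpow_add hbase]; push_cast; ring_nf

theorem slicer_phi_const_lags_const (α : ℝ) (hα : 3 < α) (τ ξ : ℕ) :
    ∃ C : ℝ, Tendsto (fun m₁ : ℕ => slicerPhi α m₁ (m₁ + τ) (m₁ + τ + ξ)) atTop (𝓝 C) := by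
  have hα0 : 0 < α := by linarith
  -- First term
  have hsum := slicer_summable hα
  have hT : Tendsto (fun m : ℕ => ∑ j ∈ Finset.range m,
      (((j:ℝ)+1) ^ 3 - (j:ℝ) ^ 3) * slicerLen α j) atTop
      (𝓝 (∑' j : ℕ, (((j:ℝ)+1) ^ 3 - (j:ℝ) ^ 3) * slicerLen α j)) :=
    hsum.hasSum.tendsto_sum_nat
  have hcube : Tendsto (fun m : ℕ => (m:ℝ) ^ 3 * slicerLen α m) atTop (𝓝 0) := by
    have := slicer_key hα 0 0 0 le_rfl le_rfl le_rfl 0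
    simp only [Nat.add_zero, add_zero] at this
    exact this.congr fun m => by ring
  have h1 : Tendsto (fun m : ℕ => 2 * ∑ k ∈ Finset.Icc 1 m, (k : ℝ) ^ 3 * slicerDelta α k)
      atTop (𝓝 (2 * (∑' j : ℕ, (((j:ℝ)+1) ^ 3 - (j:ℝ) ^ 3) * slicerLen α j))) := by
    have := (hT.sub hcube).const_mul 2
    rw [sub_zero] at this
    convert this using 2 with m
    rw [slicer_abel]
  -- generic vanishing middle-sum term
  have hmid : ∀ (i : ℕ) (p q r : ℕ),
      Tendsto (fun m : ℕ => ((m + p : ℕ):ℝ) * ((m + q : ℕ):ℝ) * ((m + r : ℕ):ℝ)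
        * slicerDelta α (m + i + 1)) atTop (𝓝 0) := by
    intro i p q r
    have k1 := slicer_key hα p q r (Nat.cast_nonneg p) (Nat.cast_nonneg q) (Nat.cast_nonneg r) i
    have k2 := slicer_key hα p q r (Nat.cast_nonneg p) (Nat.cast_nonneg q) (Nat.cast_nonneg r)
      (i + 1)
    have := k1.sub k2
    rw [sub_zero] at this
    convert this using 2 with m
    have hd : slicerDelta α (m + i + 1) = slicerLen α (m + i) - slicerLen α (m + i + 1) := by
      have : m + i + 1 - 1 = m + i := by omega
      simp [slicerDelta, this]
    rw [hd]
    have e1 : m + (i + 1) = m + i + 1 := by omega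
    rw [e1]
    push_cast
    ring
  -- second term
  have h2 : Tendsto (fun m : ℕ => 2 * (m : ℝ) *
      ∑ k ∈ Finset.Icc (m + 1) (m + τ), (k : ℝ) ^ 2 * slicerDelta α k) atTop (𝓝 0) := by
    have hrw : ∀ m : ℕ, 2 * (m : ℝ) *
        ∑ k ∈ Finset.Icc (m + 1) (m + τ), (k : ℝ) ^ 2 * slicerDelta α k
        = ∑ i ∈ Finset.range τ, 2 * (((m + 0:ℕ):ℝ) * ((m + (i+1):ℕ):ℝ) * ((m + (i+1):ℕ):ℝ)
            * slicerDelta α (m + i + 1)) := by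
      intro m
      rw [← Finset.Ico_add_one_right_eq_Icc, Finset.sum_Ico_eq_sum_range]
      have : m + τ + 1 - (m + 1) = τ := by omega
      rw [this, Finset.mul_sum]
      apply Finset.sum_congr rfl
      intro i _
      have e : m + 1 + i = m + i + 1 := by omega
      rw [e]
      have e2 : m + (i + 1) = m + i + 1 := by omega
      rw [e2]
      push_cast
      ring
    simp only [hrw]
    have : Tendsto (fun m : ℕ => ∑ i ∈ Finset.range τ,
        2 * (((m + 0:ℕ):ℝ) * ((m + (i+1):ℕ):ℝ) * ((m + (i+1):ℕ):ℝ)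
          * slicerDelta α (m + i + 1))) atTop (𝓝 (∑ _i ∈ Finset.range τ, 2 * (0:ℝ))) := by
      apply tendsto_finset_sum
      intro i _
      exact (hmid i 0 (i+1) (i+1)).const_mul 2
    simpa using this
  -- third term
  have h3 : Tendsto (fun m : ℕ => 2 * (m : ℝ) * ((m + τ : ℕ) : ℝ) *
      ∑ k ∈ Finset.Icc (m + τ + 1) (m + τ + ξ), (k : ℝ) * slicerDelta α k) atTop (𝓝 0) := by
    have hrw : ∀ m : ℕ, 2 * (m : ℝ) * ((m + τ : ℕ) : ℝ) *
        ∑ k ∈ Finset.Icc (m + τ + 1) (m + τ + ξ), (k : ℝ) * slicerDelta α k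
        = ∑ i ∈ Finset.range ξ, 2 * (((m + 0:ℕ):ℝ) * ((m + τ:ℕ):ℝ) * ((m + (τ+i+1):ℕ):ℝ)
            * slicerDelta α (m + (τ+i) + 1)) := by
      intro m
      rw [← Finset.Ico_add_one_right_eq_Icc, Finset.sum_Ico_eq_sum_range]
      have : m + τ + ξ + 1 - (m + τ + 1) = ξ := by omega
      rw [this, Finset.mul_sum]
      apply Finset.sum_congr rfl
      intro i _
      have e : m + τ + 1 + i = m + (τ + i) + 1 := by omega
      rw [e]
      have e2 : m + (τ + i + 1) = m + (τ + i) + 1 := by omega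
      rw [e2]
      push_cast
      ring
    simp only [hrw]
    have : Tendsto (fun m : ℕ => ∑ i ∈ Finset.range ξ,
        2 * (((m + 0:ℕ):ℝ) * ((m + τ:ℕ):ℝ) * ((m + (τ+i+1):ℕ):ℝ)
          * slicerDelta α (m + (τ+i) + 1))) atTop (𝓝 (∑ _i ∈ Finset.range ξ, 2 * (0:ℝ))) := by
      apply tendsto_finset_sum
      intro i _
      exact (hmid (τ+i) 0 τ (τ+i+1)).const_mul 2
    simpa using this
  -- fourth term
  have h4 : Tendsto (fun m : ℕ => 2 * (m : ℝ) * ((m + τ : ℕ) : ℝ) * ((m + τ + ξ : ℕ) : ℝ)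
      * slicerLen α (m + τ + ξ)) atTop (𝓝 0) := by
    have := (slicer_key hα 0 τ (τ + ξ) le_rfl (Nat.cast_nonneg τ)
      (by positivity) (τ + ξ)).const_mul 2
    rw [mul_zero] at this
    convert this using 2 with m
    have e : m + τ + ξ = m + (τ + ξ) := by omega
    rw [e]
    push_cast
    ring
  refine ⟨_, (((h1.add h2).add h3).add h4).congr fun m => ?_⟩
  rfl
end
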